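/- arXiv:1407.6343 — 13 statements merged into one kernel-verified Lean document; each statement's English description precedes it below -/
import Mathlib

section
/- There exists a unique vector ν : Fin J → ℝ such that: 0 < ν j < β j for every j; ∑_j ν j * μ j = λ; and ν j * μ j / (β j − ν j) = ν l * μ l / (β l − ν l) for all j, l. -/
open scoped BigOperators

/-- Under subcritical load, there exists a unique vector `ν` with
`0 < ν j < β j` for all `j`, `∑ j, ν j * μ j = λ`, and equal ratios
`ν j * μ j / (β j − ν j)` across pools. -/
theorem pull_equilibrium_exists_unique
    (J : ℕ) (hJ : 1 ≤ J) (β μ : Fin J → ℝ)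
    (hβ : ∀ j, 0 < β j) (hμ : ∀ j, 0 < μ j)
    (lam : ℝ) (hlam : 0 < lam) (hload : lam < ∑ j, β j * μ j) :
    ∃! ν : Fin J → ℝ,
      (∀ j, 0 < ν j ∧ ν j < β j) ∧
      (∑ j, ν j * μ j = lam) ∧
      (∀ j l, ν j * μ j / (β j - ν j) = ν l * μ l / (β l - ν l)) := by
  haveI : Nonempty (Fin J) := ⟨⟨0, hJ⟩⟩
  set S := ∑ j, β j * μ j with hS
  set K := ∑ j, β j * μ j ^ 2 with hK
  have hK0 : 0 ≤ K := Finset.sum_nonneg fun j _ => (mul_pos (hβ j) (pow_pos (hμ j) 2)).le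
  set f : ℝ → ℝ := fun c => ∑ j, c * β j * μ j / (μ j + c) with hf
  -- strict monotonicity of f on [0, ∞)
  have hmono : ∀ a b : ℝ, 0 ≤ a → a < b → f a < f b := by
    intro a b ha hab
    apply Finset.sum_lt_sum_of_nonempty Finset.univ_nonempty
    intro j _
    have h1 : 0 < μ j + a := by linarith [hμ j]
    have h2 : 0 < μ j + b := by linarith [hμ j]
    rw [div_lt_div_iff₀ h1 h2]
    nlinarith [hβ j, hμ j, mul_pos (hβ j) (hμ j), mul_pos (mul_pos (hβ j) (hμ j)) (hμ j)]
  -- continuity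
  have hcont : ContinuousOn f (Set.Ici (0:ℝ)) := by
    apply continuousOn_finset_sum
    intro j _
    apply ContinuousOn.div
    · exact ((continuous_id.mul continuous_const).mul continuous_const).continuousOn
    · exact (continuous_const.add continuous_id).continuousOn
    · intro c hc
      have h0 : (0:ℝ) ≤ c := hc
      have := hμ j
      intro h
      linarith
  have hf0 : f 0 = 0 := by simp [hf]
  -- a point where f exceeds lam
  have hSlam : 0 < S - lam := by linarith
  set B : ℝ := (K + 1) / (S - lam) with hB
  have hBpos : 0 < B := by positivity
  have hfB : lam < f B := by
    have hterm : ∀ j : Fin J, β j * μ j - β j * μ j ^ 2 / B ≤ B * β j * μ j / (μ j + B) := by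
      intro j
      have h1 : 0 < μ j + B := by linarith [hμ j]
      have e : β j * μ j - β j * μ j ^ 2 / B = (β j * μ j * B - β j * μ j ^ 2) / B := by
        field_simp
      rw [e, div_le_div_iff₀ hBpos h1]
      nlinarith [mul_pos (hβ j) (pow_pos (hμ j) 3), hμ j, hβ j]
    have hsum : S - K / B ≤ f B := by
      have := Finset.sum_le_sum (fun j (_ : j ∈ Finset.univ) => hterm j)
      calc S - K / B = ∑ j, (β j * μ j - β j * μ j ^ 2 / B) := by
            rw [Finset.sum_sub_distrib, ← Finset.sum_div]
        _ ≤ f B := this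
    have hKB : K / B < S - lam := by
      have e : (S - lam) * B = K + 1 := by
        rw [hB]; field_simp
      rw [div_lt_iff₀ hBpos]
      nlinarith
    linarith
  -- IVT
  obtain ⟨c, hcmem, hfc⟩ : ∃ c ∈ Set.Icc (0:ℝ) B, f c = lam := by
    have h1 : (0:ℝ) ≤ B := le_of_lt hBpos
    have := intermediate_value_Icc h1 (hcont.mono (by
      intro x hx; exact hx.1))
    have hlam' : lam ∈ Set.Icc (f 0) (f B) := by
      constructor
      · rw [hf0]; linarith
      · linarith
    obtain ⟨c, hc1, hc2⟩ := this hlam'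
    exact ⟨c, hc1, hc2⟩
  have hc0 : 0 < c := by
    rcases lt_or_eq_of_le hcmem.1 with h | h
    · exact h
    · exfalso; rw [← h] at hfc; rw [hf0] at hfc; linarith
  -- define ν
  set ν : Fin J → ℝ := fun j => c * β j / (μ j + c) with hν
  have hden : ∀ j : Fin J, 0 < μ j + c := fun j => by linarith [hμ j]
  have hνpos : ∀ j, 0 < ν j := fun j => by
    have := hβ j; have := hden j; positivity
  have hνlt : ∀ j, ν j < β j := by
    intro j
    rw [hν]
    rw [div_lt_iff₀ (hden j)]
    nlinarith [hβ j, hμ j]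
  have hνsum : ∑ j, ν j * μ j = lam := by
    rw [← hfc]
    apply Finset.sum_congr rfl
    intro j _
    rw [hν]
    field_simp
  have hratio : ∀ j, ν j * μ j / (β j - ν j) = c := by
    intro j
    have hsub : 0 < β j - ν j := by linarith [hνlt j]
    rw [div_eq_iff (ne_of_gt hsub)]
    have hv : ν j * (μ j + c) = c * β j := by
      rw [hν]; field_simp [(hden j).ne']
    nlinarith [hv]
  refine ⟨ν, ⟨fun j => ⟨hνpos j, hνlt j⟩, hνsum, fun j l => by rw [hratio j, hratio l]⟩, ?_⟩
  -- uniqueness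
  rintro ν' ⟨hbnd, hsum', heq⟩
  set j0 : Fin J := ⟨0, hJ⟩
  set c' : ℝ := ν' j0 * μ j0 / (β j0 - ν' j0) with hc'
  have hsub' : ∀ j, 0 < β j - ν' j := fun j => by linarith [(hbnd j).2]
  have hc'pos : 0 < c' := by
    have := (hbnd j0).1; have := hμ j0; have := hsub' j0; positivity
  have hratio' : ∀ j, ν' j * μ j / (β j - ν' j) = c' := fun j => heq j j0
  have hν'eq : ∀ j, ν' j = c' * β j / (μ j + c') := by
    intro j
    have h1 := hratio' j
    rw [div_eq_iff (ne_of_gt (hsub' j))] at h1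
    have hden' : 0 < μ j + c' := by linarith [hμ j]
    rw [eq_div_iff (ne_of_gt hden')]
    nlinarith [h1]
  have hfc' : f c' = lam := by
    rw [← hsum', hf]
    apply Finset.sum_congr rfl
    intro j _
    rw [hν'eq j]
    have hden' : 0 < μ j + c' := by linarith [hμ j]
    field_simp
  have hcc : c' = c := by
    by_contra h
    rcases lt_or_gt_of_ne h with h | h
    · have := hmono c' c (le_of_lt hc'pos) h; rw [hfc, hfc'] at this; linarith
    · have := hmono c c' (le_of_lt hc0) h; rw [hfc, hfc'] at this; linarith
  funext j
  rw [hν'eq j, hcc, hν]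
end

section
/- Define φ : ℝ → ℝ by φ(c) = ∑_j c * β j * μ j / (μ j + c). Then φ is continuous and strictly monotone increasing on [0, ∞), φ(0) = 0, and φ(c) tends to ∑_j β j * μ j as c → ∞; consequently there exists a unique c > 0 with φ(c) = λ. -/
open scoped BigOperators
open Filter Set

/-- `φ(c) = ∑ j, c β j μ j / (μ j + c)` is continuous and strictly
increasing on `[0, ∞)`, `φ(0) = 0`, `φ(c) → ∑ j, β j μ j` as `c → ∞`, and there
is a unique `c > 0` with `φ(c) = λ`. -/
theorem pull_phi_properties
    (J : ℕ) (hJ : 1 ≤ J) (β μ : Fin J → ℝ)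
    (hβ : ∀ j, 0 < β j) (hμ : ∀ j, 0 < μ j)
    (lam : ℝ) (hlam : 0 < lam) (hload : lam < ∑ j, β j * μ j)
    (φ : ℝ → ℝ) (hφ : ∀ c, φ c = ∑ j, c * β j * μ j / (μ j + c)) :
    ContinuousOn φ (Set.Ici 0) ∧
    StrictMonoOn φ (Set.Ici 0) ∧
    φ 0 = 0 ∧
    Tendsto φ atTop (nhds (∑ j, β j * μ j)) ∧
    ∃! c : ℝ, 0 < c ∧ φ c = lam := by
  have hφe : φ = fun c => ∑ j, c * β j * μ j / (μ j + c) := funext hφ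
  subst hφe
  have hne : ∀ (j : Fin J) (c : ℝ), c ∈ Set.Ici (0:ℝ) → μ j + c ≠ 0 := by
    intro j c hc
    have := hμ j
    have : (0:ℝ) < μ j + c := by
      have : (0:ℝ) ≤ c := hc
      linarith [hμ j]
    linarith
  have hcont : ContinuousOn (fun c => ∑ j, c * β j * μ j / (μ j + c)) (Set.Ici 0) := by
    apply continuousOn_finset_sum
    intro j _
    exact (((continuousOn_id.mul continuousOn_const).mul continuousOn_const).div
      (continuousOn_const.add continuousOn_id) (hne j))
  have hmono : StrictMonoOn (fun c => ∑ j, c * β j * μ j / (μ j + c)) (Set.Ici 0) := by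
    intro a ha b hb hab
    apply Finset.sum_lt_sum_of_nonempty
    · exact Finset.univ_nonempty_iff.mpr ⟨⟨0, hJ⟩⟩
    · intro j _
      have ha0 : (0:ℝ) ≤ a := ha
      have hb0 : (0:ℝ) ≤ b := hb
      have hda : (0:ℝ) < μ j + a := by linarith [hμ j]
      have hdb : (0:ℝ) < μ j + b := by linarith [hμ j]
      rw [div_lt_div_iff₀ hda hdb]
      nlinarith [mul_pos (mul_pos (mul_pos (hβ j) (hμ j)) (hμ j)) (sub_pos.mpr hab)]
  have hzero : (∑ j, (0:ℝ) * β j * μ j / (μ j + 0)) = 0 := by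
    simp
  have htend : Tendsto (fun c => ∑ j, c * β j * μ j / (μ j + c)) atTop
      (nhds (∑ j, β j * μ j)) := by
    apply tendsto_finset_sum
    intro j _
    have h1 : Tendsto (fun c : ℝ => μ j + c) atTop atTop :=
      tendsto_atTop_add_const_left _ _ tendsto_id
    have h2 : Tendsto (fun c : ℝ => β j * μ j * μ j * (μ j + c)⁻¹) atTop (nhds 0) := by
      simpa using (h1.inv_tendsto_atTop).const_mul (β j * μ j * μ j)
    have h3 : Tendsto (fun c : ℝ => β j * μ j - β j * μ j * μ j * (μ j + c)⁻¹) atTop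
        (nhds (β j * μ j - 0)) := tendsto_const_nhds.sub h2
    rw [sub_zero] at h3
    apply h3.congr'
    filter_upwards [eventually_ge_atTop (1:ℝ)] with c hc
    have hd : (0:ℝ) < μ j + c := by linarith [hμ j]
    field_simp
    ring
  refine ⟨hcont, hmono, hzero, htend, ?_⟩
  have hev : ∀ᶠ c in atTop, lam < ∑ j, c * β j * μ j / (μ j + c) :=
    htend.eventually (eventually_gt_nhds hload)
  obtain ⟨b, hb1, hbl⟩ := (hev.and (eventually_ge_atTop (0:ℝ))).exists
  have hmem' : lam ∈ (fun c => ∑ j, c * β j * μ j / (μ j + c)) '' Set.Icc 0 b := by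
    apply intermediate_value_Icc hbl (hcont.mono Set.Icc_subset_Ici_self)
    constructor
    · simpa [hzero] using le_of_lt hlam
    · exact le_of_lt hb1
  obtain ⟨c, hc, hcl⟩ := hmem'
  have hc0 : 0 < c := by
    rcases lt_or_eq_of_le hc.1 with h | h
    · exact h
    · exfalso; rw [← h] at hcl; simp only at hcl; rw [hzero] at hcl; linarith
  refine ⟨c, ⟨hc0, hcl⟩, ?_⟩
  intro d ⟨hd0, hdl⟩
  exact hmono.injOn (le_of_lt hd0) (le_of_lt hc0) (by simp only at hdl hcl; rw [hdl, hcl])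
end

section
/- F j (ν) = 0 for every j; moreover ν is the unique zero of F in the region D = {u : Fin J → ℝ | 0 ≤ u j ≤ β j for all j, and S(u) > 0}: if u ∈ D and F j (u) = 0 for all j, then u = ν. -/
open scoped BigOperators

/-- `S(u) = ∑ l, (β l − u l)`: the fraction of idle servers in state `u`. -/
noncomputable def fluidS {J : ℕ} (β : Fin J → ℝ) (u : Fin J → ℝ) : ℝ :=
  ∑ l, (β l - u l)

/-- The fluid drift field `F j (u) = λ (β j − u j) / S(u) − μ j u j`. -/
noncomputable def fluidF {J : ℕ} (lam : ℝ) (β μ : Fin J → ℝ)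
    (j : Fin J) (u : Fin J → ℝ) : ℝ :=
  lam * (β j - u j) / fluidS β u - μ j * u j

private lemma ratio_mono (b m r s : ℝ) (hb : 0 < b) (hm : 0 < m)
    (hr : 0 < r) (hs : 0 < s) (hrs : r < s) :
    r * b * m / (m + r) < s * b * m / (m + s) := by
  rw [div_lt_div_iff₀ (by linarith) (by linarith)]
  nlinarith [mul_pos (mul_pos (mul_pos (sub_pos.mpr hrs) hb) hm) hm]

/-- `F j (ν) = 0` for every `j`, and `ν` is the unique zero of `F`
in the region `D = {u | 0 ≤ u j ≤ β j for all j, S(u) > 0}`. -/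
theorem pull_equilibrium_unique_zero_of_drift
    (J : ℕ) (hJ : 1 ≤ J) (β μ : Fin J → ℝ)
    (hβ : ∀ j, 0 < β j) (hμ : ∀ j, 0 < μ j)
    (lam : ℝ) (hlam : 0 < lam) (hload : lam < ∑ j, β j * μ j)
    (ν : Fin J → ℝ)
    (hν1 : ∀ j, 0 < ν j ∧ ν j < β j)
    (hν2 : ∑ j, ν j * μ j = lam)
    (hν3 : ∀ j l, ν j * μ j / (β j - ν j) = ν l * μ l / (β l - ν l)) :
    (∀ j, fluidF lam β μ j ν = 0) ∧
    (∀ u : Fin J → ℝ, (∀ j, 0 ≤ u j ∧ u j ≤ β j) → 0 < fluidS β u →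
      (∀ j, fluidF lam β μ j u = 0) → u = ν) := by
  have hne : (Finset.univ : Finset (Fin J)).Nonempty := by
    have : Nonempty (Fin J) := Fin.pos_iff_nonempty.mp (by omega)
    exact Finset.univ_nonempty
  have hSν : 0 < fluidS β ν :=
    Finset.sum_pos (fun j _ => by linarith [(hν1 j).2]) hne
  set s : ℝ := lam / fluidS β ν with hs_def
  have hs : 0 < s := div_pos hlam hSν
  -- each ratio equals s
  have hrat : ∀ j, ν j * μ j = s * (β j - ν j) := by
    intro j
    have hbj : (0:ℝ) < β j - ν j := by linarith [(hν1 j).2]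
    set r : ℝ := ν j * μ j / (β j - ν j) with hr_def
    have hall : ∀ l, ν l * μ l = r * (β l - ν l) := by
      intro l
      have hbl : (0:ℝ) < β l - ν l := by linarith [(hν1 l).2]
      have := hν3 l j
      rw [← hr_def] at this
      field_simp at this
      linarith [this]
    have hsum : lam = r * fluidS β ν := by
      rw [← hν2, fluidS, Finset.mul_sum]
      exact Finset.sum_congr rfl fun l _ => hall l
    have hrs : r = s := by
      rw [hs_def, hsum]
      field_simp
    rw [← hrs]
    exact hall j
  constructor
  · intro j
    have hbj : (0:ℝ) < β j - ν j := by linarith [(hν1 j).2]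
    have : lam * (β j - ν j) / fluidS β ν = s * (β j - ν j) := by
      rw [hs_def]; ring
    rw [fluidF, this, ← hrat j]; ring
  · intro u hu hSu hF
    set r : ℝ := lam / fluidS β u with hr_def
    have hr : 0 < r := div_pos hlam hSu
    have hμu : ∀ j, μ j * u j = r * (β j - u j) := by
      intro j
      have := hF j
      rw [fluidF, sub_eq_zero] at this
      rw [← this, hr_def]; ring
    -- u j and ν j in closed form
    have hu_eq : ∀ j, u j = r * β j / (μ j + r) := by
      intro j
      have hpos : (0:ℝ) < μ j + r := by linarith [hμ j]
      have h := hμu j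
      field_simp
      nlinarith [h]
    have hν_eq : ∀ j, ν j = s * β j / (μ j + s) := by
      intro j
      have hpos : (0:ℝ) < μ j + s := by linarith [hμ j]
      have h := hrat j
      field_simp
      nlinarith [h]
    -- sums
    have hsum_u : ∑ j, r * β j * μ j / (μ j + r) = lam := by
      have h1 : ∑ j, μ j * u j = lam := by
        have : ∑ j, μ j * u j = r * fluidS β u := by
          rw [fluidS, Finset.mul_sum]
          exact Finset.sum_congr rfl fun j _ => hμu j
        rw [this, hr_def]
        field_simp
      rw [← h1]
      refine Finset.sum_congr rfl fun j _ => ?_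
      rw [hu_eq j]
      have hpos : (0:ℝ) < μ j + r := by linarith [hμ j]
      field_simp
      try ring
    have hsum_ν : ∑ j, s * β j * μ j / (μ j + s) = lam := by
      rw [← hν2]
      refine Finset.sum_congr rfl fun j _ => ?_
      rw [hν_eq j]
      have hpos : (0:ℝ) < μ j + s := by linarith [hμ j]
      field_simp
      try ring
    have hrs : r = s := by
      rcases lt_trichotomy r s with h | h | h
      · exfalso
        have : ∑ j, r * β j * μ j / (μ j + r) < ∑ j, s * β j * μ j / (μ j + s) :=
          Finset.sum_lt_sum_of_nonempty hne fun j _ =>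
            ratio_mono (β j) (μ j) r s (hβ j) (hμ j) hr hs h
        rw [hsum_u, hsum_ν] at this; exact lt_irrefl _ this
      · exact h
      · exfalso
        have : ∑ j, s * β j * μ j / (μ j + s) < ∑ j, r * β j * μ j / (μ j + r) :=
          Finset.sum_lt_sum_of_nonempty hne fun j _ =>
            ratio_mono (β j) (μ j) s r (hβ j) (hμ j) hs hr h
        rw [hsum_u, hsum_ν] at this; exact lt_irrefl _ this
    funext j
    rw [hu_eq j, hν_eq j, hrs]
end

section
/- Let T > 0 and let u, v : [0, T] → (Fin J → ℝ) be fluid solutions on [0, T] with u(0) = v(0). Then u(t) = v(t) for all t ∈ [0, T]. (Uniqueness of the fluid trajectory while a positive fraction of servers remains idle; Lemma 4(iii) of the paper.) -/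
open scoped BigOperators
open Set

/-- A fluid solution on an interval `I ⊆ [0, ∞)`: a continuous function
`u : I → (Fin J → ℝ)` with `S(u(t)) > 0` on `I`, whose coordinate maps have
derivative `F j (u(t))` at each `t ∈ I` (one-sided at endpoints). -/
def IsFluidSolution {J : ℕ} (lam : ℝ) (β μ : Fin J → ℝ)
    (I : Set ℝ) (u : ℝ → Fin J → ℝ) : Prop :=
  ContinuousOn u I ∧
  ∀ t ∈ I, 0 < fluidS β (u t) ∧
    ∀ j, HasDerivWithinAt (fun s => u s j) (fluidF lam β μ j (u t)) I t

lemma fluidS_continuous {J : ℕ} (β : Fin J → ℝ) : Continuous (fluidS β) := by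
  unfold fluidS
  exact continuous_finset_sum _ fun l _ => continuous_const.sub (continuous_apply l)

/-- Key Lipschitz estimate for the drift on a region where `S ≥ ε` and norms are
bounded by `M`. -/
lemma fluidF_lip {J : ℕ} (lam : ℝ) (hlam : 0 < lam) (β μ : Fin J → ℝ)
    (hβ : ∀ j, 0 < β j) (hμ : ∀ j, 0 < μ j)
    (ε M : ℝ) (hε : 0 < ε)
    (x y : Fin J → ℝ) (hx : ε ≤ fluidS β x) (hy : ε ≤ fluidS β y)
    (hxM : ‖x‖ ≤ M) (hyM : ‖y‖ ≤ M) (j : Fin J) :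
    |fluidF lam β μ j x - fluidF lam β μ j y| ≤
      (lam * ((∑ l, β l + J * M) + J * (∑ l, β l + M)) / ε ^ 2 + ∑ l, μ l)
        * ‖x - y‖ := by
  set Bβ : ℝ := ∑ l, β l with hBβ
  set Sx := fluidS β x with hSx
  set Sy := fluidS β y with hSy
  set d := ‖x - y‖ with hd
  have hd0 : 0 ≤ d := norm_nonneg _
  have hSxpos : 0 < Sx := lt_of_lt_of_le hε hx
  have hSypos : 0 < Sy := lt_of_lt_of_le hε hy
  have hcoord : ∀ l, |x l - y l| ≤ d := by
    intro l
    have := norm_le_pi_norm (x - y) l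
    simpa [Real.norm_eq_abs] using this
  have hyl : ∀ l, |y l| ≤ M := by
    intro l
    have := norm_le_pi_norm y l
    simpa [Real.norm_eq_abs] using this.trans hyM
  have hSdiff : |Sy - Sx| ≤ J * d := by
    have h1 : Sy - Sx = ∑ l, (x l - y l) := by
      rw [hSx, hSy]; unfold fluidS
      rw [← Finset.sum_sub_distrib]
      exact Finset.sum_congr rfl fun l _ => by ring
    rw [h1]
    calc |∑ l, (x l - y l)| ≤ ∑ l, |x l - y l| := Finset.abs_sum_le_sum_abs _ _
      _ ≤ ∑ _l : Fin J, d := Finset.sum_le_sum fun l _ => hcoord l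
      _ = J * d := by simp [mul_comm]
  have hSyB : Sy ≤ Bβ + J * M := by
    have : Sy = ∑ l, (β l - y l) := rfl
    rw [this, hBβ]
    calc ∑ l, (β l - y l) ≤ ∑ l, (β l + M) := by
          refine Finset.sum_le_sum fun l _ => ?_
          have := (abs_le.mp (hyl l)).1
          linarith
      _ = Bβ + J * M := by rw [Finset.sum_add_distrib]; simp [hBβ, mul_comm]
  have hβjy : |β j - y j| ≤ Bβ + M := by
    have hβj : β j ≤ Bβ := Finset.single_le_sum (fun i _ => (hβ i).le) (Finset.mem_univ j)
    have h1 := abs_le.mp (hyl j)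
    rw [abs_le]; constructor <;> [skip; skip] <;> nlinarith [(hβ j).le]
  have hM0 : 0 ≤ M := le_trans (norm_nonneg y) hyM
  -- the algebraic identity
  have key : fluidF lam β μ j x - fluidF lam β μ j y =
      lam * ((y j - x j) * Sy + (β j - y j) * (Sy - Sx)) / (Sx * Sy)
        - μ j * (x j - y j) := by
    unfold fluidF
    rw [← hSx, ← hSy]
    field_simp
    ring
  rw [key]
  have hnum : |(y j - x j) * Sy + (β j - y j) * (Sy - Sx)| ≤
      (Bβ + J * M) * d + (Bβ + M) * (J * d) := by
    calc |(y j - x j) * Sy + (β j - y j) * (Sy - Sx)|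
        ≤ |(y j - x j) * Sy| + |(β j - y j) * (Sy - Sx)| := abs_add_le _ _
      _ = |y j - x j| * |Sy| + |β j - y j| * |Sy - Sx| := by rw [abs_mul, abs_mul]
      _ ≤ d * (Bβ + J * M) + (Bβ + M) * (J * d) := by
          have h1 : |y j - x j| ≤ d := by rw [abs_sub_comm]; exact hcoord j
          have h2 : |Sy| = Sy := abs_of_pos hSypos
          have hBβ0 : (0:ℝ) ≤ Bβ := Finset.sum_nonneg fun l _ => (hβ l).le
          have t1 : |y j - x j| * |Sy| ≤ d * (Bβ + J * M) := by
            rw [h2]; exact mul_le_mul h1 hSyB hSypos.le hd0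
          have t2 : |β j - y j| * |Sy - Sx| ≤ (Bβ + M) * (J * d) := by
            exact mul_le_mul hβjy hSdiff (abs_nonneg _) (by linarith)
          linarith
      _ = (Bβ + J * M) * d + (Bβ + M) * (J * d) := by ring
  have hεsq : ε ^ 2 ≤ Sx * Sy := by nlinarith
  calc |lam * ((y j - x j) * Sy + (β j - y j) * (Sy - Sx)) / (Sx * Sy)
          - μ j * (x j - y j)|
      ≤ |lam * ((y j - x j) * Sy + (β j - y j) * (Sy - Sx)) / (Sx * Sy)|
          + |μ j * (x j - y j)| := abs_sub _ _
    _ ≤ lam * ((Bβ + J * M) * d + (Bβ + M) * (J * d)) / ε ^ 2 + μ j * d := by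
        gcongr ?_ + ?_
        · rw [abs_div, abs_mul, abs_of_pos hlam, abs_of_pos (mul_pos hSxpos hSypos)]
          have hBβ0 : (0:ℝ) ≤ Bβ := Finset.sum_nonneg fun l _ => (hβ l).le
          have hN0 : (0:ℝ) ≤ lam * ((Bβ + J * M) * d + (Bβ + M) * (J * d)) := by
            have : (0:ℝ) ≤ (Bβ + J * M) * d + (Bβ + M) * (J * d) := by
              have hJd : (0:ℝ) ≤ (J:ℝ) * d := by positivity
              nlinarith
            exact mul_nonneg hlam.le this
          exact div_le_div₀ hN0
            (mul_le_mul_of_nonneg_left hnum hlam.le) (by positivity) hεsq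
        · rw [abs_mul, abs_of_pos (hμ j)]
          exact mul_le_mul_of_nonneg_left (hcoord j) (hμ j).le
    _ ≤ (lam * ((Bβ + J * M) + J * (Bβ + M)) / ε ^ 2 + ∑ l, μ l) * d := by
        have hμj : μ j ≤ ∑ l, μ l :=
          Finset.single_le_sum (fun i _ => (hμ i).le) (Finset.mem_univ j)
        have h1 : lam * ((Bβ + J * M) * d + (Bβ + M) * (J * d)) / ε ^ 2
            = (lam * ((Bβ + J * M) + J * (Bβ + M)) / ε ^ 2) * d := by ring
        rw [h1]
        have h2 : μ j * d ≤ (∑ l, μ l) * d := mul_le_mul_of_nonneg_right hμj hd0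
        linarith

/-- two fluid solutions on `[0, T]` with the same initial value
coincide on `[0, T]` (uniqueness of the fluid trajectory while a positive
fraction of servers remains idle; Lemma 4(iii)). -/
theorem pull_fluid_solution_unique_on_Icc
    (J : ℕ) (hJ : 1 ≤ J) (β μ : Fin J → ℝ)
    (hβ : ∀ j, 0 < β j) (hμ : ∀ j, 0 < μ j)
    (lam : ℝ) (hlam : 0 < lam) (hload : lam < ∑ j, β j * μ j)
    (T : ℝ) (hT : 0 < T)
    (u v : ℝ → Fin J → ℝ)
    (hu : IsFluidSolution lam β μ (Icc 0 T) u)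
    (hv : IsFluidSolution lam β μ (Icc 0 T) v)
    (h0 : u 0 = v 0) :
    ∀ t ∈ Icc (0:ℝ) T, u t = v t := by
  obtain ⟨huc, huD⟩ := hu
  obtain ⟨hvc, hvD⟩ := hv
  have hne : (Icc (0:ℝ) T).Nonempty := ⟨0, le_refl 0, hT.le⟩
  -- lower bound on S along both trajectories
  have hφc : ContinuousOn (fun t => min (fluidS β (u t)) (fluidS β (v t))) (Icc 0 T) :=
    continuous_min.comp_continuousOn (f := fun t => (fluidS β (u t), fluidS β (v t)))
      (((fluidS_continuous β).comp_continuousOn huc).prodMk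
        ((fluidS_continuous β).comp_continuousOn hvc))
  obtain ⟨t0, ht0, hεmin'⟩ := isCompact_Icc.exists_isMinOn hne hφc
  have hεmin := isMinOn_iff.mp hεmin'
  set ε := min (fluidS β (u t0)) (fluidS β (v t0)) with hεdef
  have hε : 0 < ε := lt_min (huD t0 ht0).1 (hvD t0 ht0).1
  -- upper bound on norms along both trajectories
  have hψc : ContinuousOn (fun t => max ‖u t‖ ‖v t‖) (Icc 0 T) :=
    continuous_max.comp_continuousOn (f := fun t => (‖u t‖, ‖v t‖)) ((huc.norm).prodMk (hvc.norm))
  obtain ⟨t1, ht1, hMmax'⟩ := isCompact_Icc.exists_isMaxOn hne hψc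
  have hMmax := isMaxOn_iff.mp hMmax'
  set M := max ‖u t1‖ ‖v t1‖ with hMdef
  -- the Lipschitz field
  set F : ℝ → (Fin J → ℝ) → (Fin J → ℝ) := fun _ x j => fluidF lam β μ j x with hF
  set s : ℝ → Set (Fin J → ℝ) := fun _ => {x | ε ≤ fluidS β x ∧ ‖x‖ ≤ M} with hs
  set K0 : ℝ := lam * ((∑ l, β l + J * M) + J * (∑ l, β l + M)) / ε ^ 2 + ∑ l, μ l
    with hK0
  have hM0 : (0:ℝ) ≤ M := le_trans (norm_nonneg _) (le_max_left _ _)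
  have hK0nn : 0 ≤ K0 := by
    have hβ0 : (0:ℝ) ≤ ∑ l, β l := Finset.sum_nonneg fun l _ => (hβ l).le
    have hμ0 : (0:ℝ) ≤ ∑ l, μ l := Finset.sum_nonneg fun l _ => (hμ l).le
    have : (0:ℝ) ≤ lam * ((∑ l, β l + J * M) + J * (∑ l, β l + M)) / ε ^ 2 := by
      positivity
    rw [hK0]; linarith
  have hlip : ∀ t : ℝ, LipschitzOnWith K0.toNNReal (F t) (s t) := by
    intro t
    apply LipschitzOnWith.of_dist_le_mul
    intro x hx y hy
    have hKcoe : (K0.toNNReal : ℝ) = K0 := Real.coe_toNNReal _ hK0nn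
    rw [hKcoe]
    have hKd : 0 ≤ K0 * dist x y := mul_nonneg hK0nn dist_nonneg
    rw [dist_pi_le_iff hKd]
    intro j
    rw [Real.dist_eq, dist_eq_norm]
    exact fluidF_lip lam hlam β μ hβ hμ ε M hε x y hx.1 hy.1 hx.2 hy.2 j
  -- membership of trajectories in s
  have hus : ∀ t ∈ Icc (0:ℝ) T, u t ∈ s t := by
    intro t ht
    refine ⟨le_trans (le_trans (hεmin t ht) (min_le_left _ _)) (le_refl _), ?_⟩
    exact le_trans (le_max_left _ _) (hMmax t ht)
  have hvs : ∀ t ∈ Icc (0:ℝ) T, v t ∈ s t := by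
    intro t ht
    refine ⟨le_trans (le_trans (hεmin t ht) (min_le_right _ _)) (le_refl _), ?_⟩
    exact le_trans (le_max_right _ _) (hMmax t ht)
  -- derivatives in the required form
  have hderiv : ∀ (w : ℝ → Fin J → ℝ),
      (∀ t ∈ Icc (0:ℝ) T, 0 < fluidS β (w t) ∧
        ∀ j, HasDerivWithinAt (fun s => w s j) (fluidF lam β μ j (w t)) (Icc 0 T) t) →
      ∀ t ∈ Ico (0:ℝ) T, HasDerivWithinAt w (F t (w t)) (Ici t) t := by
    intro w hw t ht
    have htI : t ∈ Icc (0:ℝ) T := ⟨ht.1, ht.2.le⟩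
    have hmem : Icc (0:ℝ) T ∈ nhdsWithin t (Ici t) := by
      refine mem_nhdsWithin.2 ⟨Iio T, isOpen_Iio, ht.2, ?_⟩
      rintro x ⟨hx1, hx2⟩
      exact ⟨ht.1.trans hx2, hx1.le⟩
    exact hasDerivWithinAt_pi.2 fun j => HasDerivWithinAt.mono_of_mem_nhdsWithin ((hw t htI).2 j) hmem
  have := ODE_solution_unique_of_mem_Icc_right (v := F) (s := s) (fun t _ => hlip t)
    huc (hderiv u huD) (fun t ht => hus t (Ico_subset_Icc_self ht))
    hvc (hderiv v hvD) (fun t ht => hvs t (Ico_subset_Icc_self ht))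
    h0
  exact fun t ht => this ht
end

section
/- There exists a fluid solution u on [0, ∞) with u(0) = 0; it satisfies 0 ≤ u(t) j ≤ ν j for all t ≥ 0 and all j; and it is unique: any fluid solution on [0, ∞) with initial value 0 coincides with u. -/
open scoped BigOperators NNReal
open Set Filter Topology

set_option linter.unusedSectionVars false
set_option maxHeartbeats 1000000

namespace PullFluidAux

variable {J : ℕ}

/-- clamp each coordinate into `[0, ν j]`. -/
noncomputable def clampv (ν x : Fin J → ℝ) : Fin J → ℝ := fun j => max 0 (min (x j) (ν j))

noncomputable def Fvec (lam : ℝ) (β μ : Fin J → ℝ) (x : Fin J → ℝ) : Fin J → ℝ :=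
  fun j => fluidF lam β μ j x

lemma clampv_nonneg (ν x : Fin J → ℝ) (j : Fin J) : 0 ≤ clampv ν x j := le_max_left _ _

lemma clampv_le {ν : Fin J → ℝ} (hν : ∀ j, 0 ≤ ν j) (x : Fin J → ℝ) (j : Fin J) :
    clampv ν x j ≤ ν j := max_le (hν j) (min_le_right _ _)

lemma clampv_lipschitz (ν : Fin J → ℝ) : LipschitzWith 1 (clampv ν) := by
  rw [lipschitzWith_iff_dist_le_mul]
  intro x y
  rw [NNReal.coe_one, one_mul, dist_pi_le_iff dist_nonneg]
  intro j
  rw [Real.dist_eq]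
  calc |clampv ν x j - clampv ν y j|
      ≤ max |(0:ℝ) - 0| |min (x j) (ν j) - min (y j) (ν j)| :=
        abs_max_sub_max_le_max _ _ _ _
    _ ≤ max |(0:ℝ) - 0| (max |x j - y j| |ν j - ν j|) := by
        exact max_le_max le_rfl (abs_min_sub_min_le_max _ _ _ _)
    _ ≤ |x j - y j| := by simp
    _ ≤ dist x y := by rw [← Real.dist_eq]; exact dist_le_pi_dist x y j

lemma fluidS_mono {β ν y : Fin J → ℝ} (h : ∀ j, y j ≤ ν j) :
    fluidS β ν ≤ fluidS β y :=
  Finset.sum_le_sum fun j _ => by have := h j; linarith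

lemma fluidS_clampv_ge {β ν : Fin J → ℝ} (hν : ∀ j, 0 ≤ ν j) (x : Fin J → ℝ) :
    fluidS β ν ≤ fluidS β (clampv ν x) :=
  fluidS_mono fun j => clampv_le hν x j

/-- The main Lipschitz estimate for the fluid drift field. -/
lemma Fvec_lipschitzOnWith {β μ : Fin J → ℝ} (hβ : ∀ j, 0 < β j) (hμ : ∀ j, 0 < μ j)
    {lam : ℝ} (hlam : 0 < lam) {δ R : ℝ} (hδ : 0 < δ) (hR : 0 ≤ R) :
    ∃ K : ℝ≥0, LipschitzOnWith K (Fvec lam β μ) {x | ‖x‖ ≤ R ∧ δ ≤ fluidS β x} := by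
  set B := ∑ j, β j with hBdef
  set M := ∑ j, μ j with hMdef
  have hB : 0 ≤ B := Finset.sum_nonneg fun j _ => (hβ j).le
  have hM : 0 ≤ M := Finset.sum_nonneg fun j _ => (hμ j).le
  set C : ℝ := lam * ((B + R) * J + (B + J * R)) / (δ * δ) + M with hCdef
  have hC : 0 ≤ C := by positivity
  refine ⟨C.toNNReal, ?_⟩
  rw [lipschitzOnWith_iff_dist_le_mul]
  intro x hx y hy
  rw [Real.coe_toNNReal C hC]
  have hd : (0:ℝ) ≤ dist x y := dist_nonneg
  set d := dist x y with hddef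
  rw [dist_pi_le_iff (by positivity)]
  intro j
  -- coordinate and sum bounds
  have hcoord : ∀ l, |x l - y l| ≤ d := by
    intro l; rw [← Real.dist_eq]; exact dist_le_pi_dist x y l
  have hxb : ∀ l, |x l| ≤ R := fun l => le_trans (norm_le_pi_norm x l) hx.1
  have hyb : ∀ l, |y l| ≤ R := fun l => le_trans (norm_le_pi_norm y l) hy.1
  have hSx : δ ≤ fluidS β x := hx.2
  have hSy : δ ≤ fluidS β y := hy.2
  have hSx0 : (0:ℝ) < fluidS β x := lt_of_lt_of_le hδ hSx
  have hSy0 : (0:ℝ) < fluidS β y := lt_of_lt_of_le hδ hSy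
  have hSxabs : |fluidS β x| ≤ B + J * R := by
    rw [abs_of_pos hSx0]
    calc fluidS β x ≤ ∑ l, (β l + R) := Finset.sum_le_sum fun l _ => by
          have := hxb l; have := abs_le.1 (hxb l); linarith
      _ = B + J * R := by
          rw [Finset.sum_add_distrib, Finset.sum_const, Finset.card_univ, Fintype.card_fin]
          ring
  have hSdiff : |fluidS β y - fluidS β x| ≤ J * d := by
    have he : fluidS β y - fluidS β x = ∑ l, (x l - y l) := by
      rw [fluidS, fluidS, ← Finset.sum_sub_distrib]
      exact Finset.sum_congr rfl fun l _ => by ring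
    rw [he]
    calc |∑ l, (x l - y l)| ≤ ∑ l, |x l - y l| := Finset.abs_sum_le_sum_abs _ _
      _ ≤ ∑ _l : Fin J, d := Finset.sum_le_sum fun l _ => hcoord l
      _ = J * d := by rw [Finset.sum_const, Finset.card_univ, Fintype.card_fin]; ring
  have hβj : β j ≤ B := Finset.single_le_sum (fun l _ => (hβ l).le) (Finset.mem_univ j)
  have hμj : μ j ≤ M := Finset.single_le_sum (fun l _ => (hμ l).le) (Finset.mem_univ j)
  have hβxj : |β j - x j| ≤ B + R := by
    have := abs_le.1 (hxb j); have h0 := hβ j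
    rw [abs_le]; constructor <;> linarith
  -- the numerator
  set N : ℝ := (β j - x j) * (fluidS β y - fluidS β x) + (y j - x j) * fluidS β x with hNdef
  have hNbound : |N| ≤ ((B + R) * J + (B + J * R)) * d := by
    calc |N| ≤ |(β j - x j) * (fluidS β y - fluidS β x)| + |(y j - x j) * fluidS β x| :=
          abs_add_le _ _
      _ = |β j - x j| * |fluidS β y - fluidS β x| + |y j - x j| * |fluidS β x| := by
          rw [abs_mul, abs_mul]
      _ ≤ (B + R) * (J * d) + d * (B + J * R) := by
          have h1 : |y j - x j| ≤ d := by rw [abs_sub_comm]; exact hcoord j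
          have := mul_le_mul hβxj hSdiff (abs_nonneg _) (by linarith)
          have := mul_le_mul h1 hSxabs (abs_nonneg _) hd
          nlinarith [abs_nonneg (β j - x j), abs_nonneg (y j - x j)]
      _ = ((B + R) * J + (B + J * R)) * d := by ring
  have hkey : fluidF lam β μ j x - fluidF lam β μ j y
      = lam * N / (fluidS β x * fluidS β y) - μ j * (x j - y j) := by
    rw [fluidF, fluidF, hNdef]
    field_simp
    ring
  rw [Real.dist_eq]
  calc |Fvec lam β μ x j - Fvec lam β μ y j|
      = |lam * N / (fluidS β x * fluidS β y) - μ j * (x j - y j)| := by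
        rw [Fvec, Fvec]; rw [hkey]
    _ ≤ |lam * N / (fluidS β x * fluidS β y)| + |μ j * (x j - y j)| := abs_sub _ _
    _ ≤ lam * (((B + R) * J + (B + J * R)) * d) / (δ * δ) + M * d := by
        apply add_le_add
        · rw [abs_div, abs_mul, abs_of_pos hlam, abs_of_pos (mul_pos hSx0 hSy0)]
          apply div_le_div₀ (by positivity)
            (mul_le_mul_of_nonneg_left hNbound hlam.le) (by positivity)
          exact mul_le_mul hSx hSy hδ.le hSx0.le
        · rw [abs_mul, abs_of_pos (hμ j)]
          exact mul_le_mul hμj (hcoord j) (abs_nonneg _) hM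
    _ = C * d := by rw [hCdef]; ring

end PullFluidAux

open Topology
set_option linter.unusedSectionVars false
set_option maxHeartbeats 1000000

namespace PullFluidAux2

variable {E : Type*} [NormedAddCommGroup E] [NormedSpace ℝ E] [CompleteSpace E]

lemma deriv_Ici_of_Icc {f : ℝ → E} {d : E} {T t : ℝ} (ht : 0 ≤ t) (hT : t < T)
    (h : HasDerivWithinAt f d (Icc 0 T) t) : HasDerivWithinAt f d (Ici t) t := by
  apply h.mono_of_mem_nhdsWithin
  rw [mem_nhdsWithin]
  exact ⟨Iio T, isOpen_Iio, hT, fun s hs => ⟨le_trans ht hs.2, hs.1.le⟩⟩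

lemma deriv_Ici0_of_Icc {f : ℝ → E} {d : E} {T t : ℝ} (ht : 0 ≤ t) (hT : t < T)
    (h : HasDerivWithinAt f d (Icc 0 T) t) : HasDerivWithinAt f d (Ici 0) t := by
  apply h.mono_of_mem_nhdsWithin
  rw [mem_nhdsWithin]
  exact ⟨Iio T, isOpen_Iio, hT, fun s hs => ⟨hs.2, hs.1.le⟩⟩

lemma exists_sol_Icc (G : E → E) {K : ℝ≥0} (hG : LipschitzWith K G)
    {Cb : ℝ} (hGb : ∀ x, ‖G x‖ ≤ Cb) {T : ℝ} (hT : 0 ≤ T) :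
    ∃ f : ℝ → E, f 0 = 0 ∧ ∀ t ∈ Icc (0:ℝ) T, HasDerivWithinAt f (G (f t)) (Icc 0 T) t := by
  have hCb : 0 ≤ Cb := le_trans (norm_nonneg _) (hGb 0)
  have hpl : IsPicardLindelof (fun _ x => G x) (tmin := 0) (tmax := T) ⟨0, ⟨le_refl 0, hT⟩⟩
      (0:E) (Cb.toNNReal * T.toNNReal) 0 Cb.toNNReal K :=
    IsPicardLindelof.of_time_independent (fun x _ => (hGb x).trans (Real.le_coe_toNNReal Cb))
      hG.lipschitzOnWith (by
        simp only [NNReal.coe_zero, sub_zero, zero_sub, NNReal.coe_mul, Real.coe_toNNReal _ hT]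
        rw [max_eq_left (by linarith)])
  exact hpl.exists_eq_forall_mem_Icc_hasDerivWithinAt₀

lemma uniq_sol (G : E → E) {K : ℝ≥0} (hG : LipschitzWith K G) {f g : ℝ → E} {a b : ℝ}
    (hf : ContinuousOn f (Icc a b)) (hf' : ∀ t ∈ Ico a b, HasDerivWithinAt f (G (f t)) (Ici t) t)
    (hg : ContinuousOn g (Icc a b)) (hg' : ∀ t ∈ Ico a b, HasDerivWithinAt g (G (g t)) (Ici t) t)
    (hab : f a = g a) : EqOn f g (Icc a b) :=
  ODE_solution_unique_of_mem_Icc_right (v := fun _ x => G x) (s := fun _ => univ)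
    (fun _ _ => hG.lipschitzOnWith) hf hf' (fun _ _ => mem_univ _) hg hg'
    (fun _ _ => mem_univ _) hab

lemma exists_global (G : E → E) {K : ℝ≥0} (hG : LipschitzWith K G)
    {Cb : ℝ} (hGb : ∀ x, ‖G x‖ ≤ Cb) :
    ∃ u : ℝ → E, u 0 = 0 ∧ ∀ t ∈ Ici (0:ℝ), HasDerivWithinAt u (G (u t)) (Ici 0) t := by
  have EX : ∀ n : ℕ, ∃ f : ℝ → E, f 0 = 0 ∧
      ∀ t ∈ Icc (0:ℝ) ((n:ℝ)+1), HasDerivWithinAt f (G (f t)) (Icc 0 ((n:ℝ)+1)) t :=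
    fun n => exists_sol_Icc G hG hGb (by positivity)
  choose sol hsol0 hsolD using EX
  have hsolc : ∀ n : ℕ, ContinuousOn (sol n) (Icc (0:ℝ) ((n:ℝ)+1)) :=
    fun n t ht => (hsolD n t ht).continuousWithinAt
  have consist : ∀ m n : ℕ, ∀ t : ℝ,
      t ∈ Icc (0:ℝ) (min ((m:ℝ)+1) ((n:ℝ)+1)) → sol m t = sol n t := by
    intro m n t ht
    have hmm : Icc (0:ℝ) (min ((m:ℝ)+1) ((n:ℝ)+1)) ⊆ Icc 0 ((m:ℝ)+1) :=
      Icc_subset_Icc le_rfl (min_le_left _ _)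
    have hnn : Icc (0:ℝ) (min ((m:ℝ)+1) ((n:ℝ)+1)) ⊆ Icc 0 ((n:ℝ)+1) :=
      Icc_subset_Icc le_rfl (min_le_right _ _)
    refine uniq_sol G hG ((hsolc m).mono hmm) ?_ ((hsolc n).mono hnn) ?_
      (by rw [hsol0, hsol0]) ht
    · intro s hs
      exact deriv_Ici_of_Icc hs.1 (lt_of_lt_of_le hs.2 (min_le_left _ _))
        (hsolD m s (hmm ⟨hs.1, hs.2.le⟩))
    · intro s hs
      exact deriv_Ici_of_Icc hs.1 (lt_of_lt_of_le hs.2 (min_le_right _ _))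
        (hsolD n s (hnn ⟨hs.1, hs.2.le⟩))
  have hkey : ∀ n : ℕ, ∀ t ∈ Icc (0:ℝ) ((n:ℝ)+1), sol ⌈t⌉₊ t = sol n t := by
    intro n t ht
    refine consist ⌈t⌉₊ n t ⟨ht.1, le_min ((Nat.le_ceil t).trans (by linarith)) ht.2⟩
  refine ⟨fun t => sol ⌈t⌉₊ t, by simpa using hsol0 0, ?_⟩
  intro t ht
  have htn : t < (⌈t⌉₊:ℝ)+1 := lt_of_le_of_lt (Nat.le_ceil t) (by linarith)
  have h1 := hsolD ⌈t⌉₊ t ⟨ht, htn.le⟩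
  have h2 : HasDerivWithinAt (sol ⌈t⌉₊) (G (sol ⌈t⌉₊ t)) (Ici 0) t :=
    deriv_Ici0_of_Icc ht htn h1
  have hmem : Icc (0:ℝ) ((⌈t⌉₊:ℝ)+1) ∈ 𝓝[Ici 0] t :=
    mem_nhdsWithin.mpr ⟨Iio ((⌈t⌉₊:ℝ)+1), isOpen_Iio, htn, fun s hs => ⟨hs.2, hs.1.le⟩⟩
  have heqv : (fun s => sol ⌈s⌉₊ s) =ᶠ[𝓝[Ici 0] t] sol ⌈t⌉₊ :=
    eventuallyEq_of_mem hmem (hkey ⌈t⌉₊)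
  exact h2.congr_of_eventuallyEq heqv rfl

end PullFluidAux2

open PullFluidAux PullFluidAux2

/-- there is a unique fluid solution on `[0, ∞)` started from the
idle state `0`, and it stays below the equilibrium point: `0 ≤ u(t) j ≤ ν j`. -/
theorem pull_fluid_from_idle_exists_unique
    (J : ℕ) (hJ : 1 ≤ J) (β μ : Fin J → ℝ)
    (hβ : ∀ j, 0 < β j) (hμ : ∀ j, 0 < μ j)
    (lam : ℝ) (hlam : 0 < lam) (hload : lam < ∑ j, β j * μ j)
    (ν : Fin J → ℝ)
    (hν1 : ∀ j, 0 < ν j ∧ ν j < β j)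
    (hν2 : ∑ j, ν j * μ j = lam)
    (hν3 : ∀ j l, ν j * μ j / (β j - ν j) = ν l * μ l / (β l - ν l)) :
    ∃ u : ℝ → Fin J → ℝ,
      IsFluidSolution lam β μ (Ici 0) u ∧ u 0 = 0 ∧
      (∀ t ∈ Ici (0:ℝ), ∀ j, 0 ≤ u t j ∧ u t j ≤ ν j) ∧
      (∀ v : ℝ → Fin J → ℝ, IsFluidSolution lam β μ (Ici 0) v → v 0 = 0 →
        ∀ t ∈ Ici (0:ℝ), v t = u t) := by
  classical
  have hne : Nonempty (Fin J) := ⟨⟨0, hJ⟩⟩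
  have hν0 : ∀ j, 0 ≤ ν j := fun j => (hν1 j).1.le
  have hβν : ∀ l, 0 < β l - ν l := fun l => by have := (hν1 l).2; linarith
  set σ := fluidS β ν with hσdef
  have hσ : 0 < σ := Finset.sum_pos (fun l _ => hβν l) Finset.univ_nonempty
  -- the equilibrium identity
  have heq : ∀ j, μ j * ν j * σ = lam * (β j - ν j) := by
    intro j
    have hsum : lam = ν j * μ j / (β j - ν j) * σ := by
      rw [← hν2, hσdef, fluidS, Finset.mul_sum]
      refine Finset.sum_congr rfl fun l _ => ?_
      rw [hν3 j l]
      exact (div_mul_cancel₀ _ (hβν l).ne').symm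
    have h := (hβν j).ne'
    rw [hsum, div_mul_eq_mul_div, div_mul_eq_mul_div, eq_div_iff h]
    ring
  set B := ∑ l, β l with hBdef
  set M := ∑ l, μ l with hMdef
  have hB0 : 0 ≤ B := Finset.sum_nonneg fun l _ => (hβ l).le
  have hM0 : 0 ≤ M := Finset.sum_nonneg fun l _ => (hμ l).le
  have hβB : ∀ j, β j ≤ B := fun j =>
    Finset.single_le_sum (fun l _ => (hβ l).le) (Finset.mem_univ j)
  have hμM : ∀ j, μ j ≤ M := fun j =>
    Finset.single_le_sum (fun l _ => (hμ l).le) (Finset.mem_univ j)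
  have hνB : ∀ j, ν j ≤ B := fun j => le_trans (hν1 j).2.le (hβB j)
  set G : (Fin J → ℝ) → (Fin J → ℝ) := fun x => Fvec lam β μ (clampv ν x) with hGdef
  -- facts about the clamped field G
  have hclampnorm : ∀ x, ‖clampv ν x‖ ≤ B := by
    intro x
    rw [pi_norm_le_iff_of_nonneg hB0]
    intro j
    rw [Real.norm_eq_abs, abs_of_nonneg (clampv_nonneg ν x j)]
    exact le_trans (clampv_le hν0 x j) (hνB j)
  have hclampS : ∀ x, σ ≤ fluidS β (clampv ν x) := fun x => fluidS_clampv_ge hν0 x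
  obtain ⟨K, hK⟩ := Fvec_lipschitzOnWith hβ hμ hlam hσ hB0
  have hGlip : LipschitzWith (K * 1) G := by
    rw [← lipschitzOnWith_univ]
    exact hK.comp ((clampv_lipschitz ν).lipschitzOnWith)
      (fun x _ => ⟨hclampnorm x, hclampS x⟩)
  have hGb : ∀ x, ‖G x‖ ≤ lam * B / σ + M * B := by
    intro x
    rw [pi_norm_le_iff_of_nonneg (by positivity)]
    intro j
    have hc0 : 0 ≤ clampv ν x j := clampv_nonneg ν x j
    have hcν : clampv ν x j ≤ ν j := clampv_le hν0 x j
    have hS : σ ≤ fluidS β (clampv ν x) := hclampS x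
    have hS0 : 0 < fluidS β (clampv ν x) := lt_of_lt_of_le hσ hS
    have hnum : 0 ≤ β j - clampv ν x j := by have := (hν1 j).2; linarith
    rw [Real.norm_eq_abs]
    show |fluidF lam β μ j (clampv ν x)| ≤ _
    rw [fluidF]
    have h1 : 0 ≤ lam * (β j - clampv ν x j) / fluidS β (clampv ν x) :=
      div_nonneg (mul_nonneg hlam.le hnum) hS0.le
    have h2 : lam * (β j - clampv ν x j) / fluidS β (clampv ν x) ≤ lam * B / σ := by
      apply div_le_div₀ (by positivity) ?_ hσ hS
      have hb : β j - clampv ν x j ≤ B := by have := hβB j; linarith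
      exact mul_le_mul_of_nonneg_left hb hlam.le
    have h3 : 0 ≤ μ j * clampv ν x j := mul_nonneg (hμ j).le hc0
    have h4 : μ j * clampv ν x j ≤ M * B :=
      mul_le_mul (hμM j) (le_trans hcν (hνB j)) hc0 hM0
    calc |lam * (β j - clampv ν x j) / fluidS β (clampv ν x) - μ j * clampv ν x j|
        ≤ |lam * (β j - clampv ν x j) / fluidS β (clampv ν x)| + |μ j * clampv ν x j| :=
          abs_sub _ _
      _ ≤ lam * B / σ + M * B := by
          rw [abs_of_nonneg h1, abs_of_nonneg h3]; exact add_le_add h2 h4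
  obtain ⟨u, hu0, huD⟩ := exists_global G hGlip hGb
  have hucont : ContinuousOn u (Ici 0) := fun t ht => (huD t ht).continuousWithinAt
  have huDj : ∀ t ∈ Ici (0:ℝ), ∀ j, HasDerivWithinAt (fun s => u s j) (G (u t) j) (Ici 0) t :=
    fun t ht j => hasDerivWithinAt_pi.mp (huD t ht) j
  have huDAt : ∀ t : ℝ, 0 < t → ∀ j, HasDerivAt (fun s => u s j) (G (u t) j) t :=
    fun t ht j => (huDj t ht.le j).hasDerivAt (Ici_mem_nhds ht)
  have hucj : ∀ j, ContinuousOn (fun s => u s j) (Ici 0) :=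
    fun j => (continuous_apply j).comp_continuousOn hucont
  -- invariance: lower bound
  have hlow : ∀ t ∈ Ici (0:ℝ), ∀ j, 0 ≤ u t j := by
    intro t ht j
    by_contra hneg
    push_neg at hneg
    have ht0 : (0:ℝ) < t := by
      rcases eq_or_lt_of_le (mem_Ici.mp ht) with h | h
      · exfalso; rw [← h, hu0] at hneg; exact absurd hneg (by norm_num)
      · exact h
    set A := {s : ℝ | s ∈ Icc 0 t ∧ 0 ≤ u s j} with hAdef
    have hA0 : (0:ℝ) ∈ A := ⟨⟨le_rfl, ht0.le⟩, by rw [hu0]; norm_num⟩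
    have hAc : IsClosed A := by
      have : A = Icc 0 t ∩ (fun s => u s j) ⁻¹' (Ici 0) := rfl
      rw [this]
      exact ContinuousOn.preimage_isClosed_of_isClosed
        ((hucj j).mono Icc_subset_Ici_self) isClosed_Icc isClosed_Ici
    have hbdd : BddAbove A := ⟨t, fun s hs => hs.1.2⟩
    set t₀ := sSup A with ht₀def
    have ht₀A : t₀ ∈ A := hAc.csSup_mem ⟨0, hA0⟩ hbdd
    have ht₀0 : 0 ≤ t₀ := ht₀A.1.1
    have ht₀t : t₀ < t := by
      rcases eq_or_lt_of_le ht₀A.1.2 with h | h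
      · exfalso; rw [h] at ht₀A; linarith [ht₀A.2]
      · exact h
    have hneg' : ∀ s, t₀ < s → s ≤ t → u s j < 0 := by
      intro s hs1 hs2
      by_contra hc
      push_neg at hc
      exact absurd (le_csSup hbdd ⟨⟨le_trans ht₀0 hs1.le, hs2⟩, hc⟩) (not_le.mpr hs1)
    have hmono : MonotoneOn (fun s => u s j) (Icc t₀ t) := by
      apply monotoneOn_of_deriv_nonneg (convex_Icc _ _)
      · exact (hucj j).mono fun s hs => le_trans ht₀0 hs.1
      · rw [interior_Icc]
        intro s hs
        exact (huDAt s (lt_of_le_of_lt ht₀0 hs.1) j).differentiableAt.differentiableWithinAt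
      · rw [interior_Icc]
        intro s hs
        rw [(huDAt s (lt_of_le_of_lt ht₀0 hs.1) j).deriv]
        have husj : u s j < 0 := hneg' s hs.1 hs.2.le
        have hcj : clampv ν (u s) j = 0 := by
          rw [clampv]
          rw [min_eq_left (le_trans husj.le (hν1 j).1.le), max_eq_left husj.le]
        show 0 ≤ fluidF lam β μ j (clampv ν (u s))
        rw [fluidF, hcj]
        have hS0 : 0 < fluidS β (clampv ν (u s)) := lt_of_lt_of_le hσ (hclampS (u s))
        rw [mul_zero, sub_zero, sub_zero]
        exact div_nonneg (mul_nonneg hlam.le (hβ j).le) hS0.le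
    have := hmono (left_mem_Icc.mpr ht₀t.le) (right_mem_Icc.mpr ht₀t.le) ht₀t.le
    simp only at this
    linarith [ht₀A.2]
  -- invariance: upper bound
  have hup : ∀ t ∈ Ici (0:ℝ), ∀ j, u t j ≤ ν j := by
    intro t ht j
    by_contra hneg
    push_neg at hneg
    have ht0 : (0:ℝ) < t := by
      rcases eq_or_lt_of_le (mem_Ici.mp ht) with h | h
      · exfalso; rw [← h, hu0] at hneg
        have := (hν1 j).1
        simp at hneg
        linarith
      · exact h
    set A := {s : ℝ | s ∈ Icc 0 t ∧ u s j ≤ ν j} with hAdef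
    have hA0 : (0:ℝ) ∈ A := ⟨⟨le_rfl, ht0.le⟩, by rw [hu0]; simpa using (hν1 j).1.le⟩
    have hAc : IsClosed A := by
      have : A = Icc 0 t ∩ (fun s => u s j) ⁻¹' (Iic (ν j)) := rfl
      rw [this]
      exact ContinuousOn.preimage_isClosed_of_isClosed
        ((hucj j).mono Icc_subset_Ici_self) isClosed_Icc isClosed_Iic
    have hbdd : BddAbove A := ⟨t, fun s hs => hs.1.2⟩
    set t₀ := sSup A with ht₀def
    have ht₀A : t₀ ∈ A := hAc.csSup_mem ⟨0, hA0⟩ hbdd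
    have ht₀0 : 0 ≤ t₀ := ht₀A.1.1
    have ht₀t : t₀ < t := by
      rcases eq_or_lt_of_le ht₀A.1.2 with h | h
      · exfalso; rw [h] at ht₀A; linarith [ht₀A.2]
      · exact h
    have hneg' : ∀ s, t₀ < s → s ≤ t → ν j < u s j := by
      intro s hs1 hs2
      by_contra hc
      push_neg at hc
      exact absurd (le_csSup hbdd ⟨⟨le_trans ht₀0 hs1.le, hs2⟩, hc⟩) (not_le.mpr hs1)
    have hanti : AntitoneOn (fun s => u s j) (Icc t₀ t) := by
      apply antitoneOn_of_deriv_nonpos (convex_Icc _ _)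
      · exact (hucj j).mono fun s hs => le_trans ht₀0 hs.1
      · rw [interior_Icc]
        intro s hs
        exact (huDAt s (lt_of_le_of_lt ht₀0 hs.1) j).differentiableAt.differentiableWithinAt
      · rw [interior_Icc]
        intro s hs
        rw [(huDAt s (lt_of_le_of_lt ht₀0 hs.1) j).deriv]
        have husj : ν j < u s j := hneg' s hs.1 hs.2.le
        have hcj : clampv ν (u s) j = ν j := by
          rw [clampv]
          rw [min_eq_right husj.le, max_eq_right (hν0 j)]
        show fluidF lam β μ j (clampv ν (u s)) ≤ 0
        rw [fluidF, hcj]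
        have hS : σ ≤ fluidS β (clampv ν (u s)) := hclampS (u s)
        have hS0 : 0 < fluidS β (clampv ν (u s)) := lt_of_lt_of_le hσ hS
        have hb : lam * (β j - ν j) / fluidS β (clampv ν (u s)) ≤ lam * (β j - ν j) / σ :=
          div_le_div_of_nonneg_left (mul_nonneg hlam.le (hβν j).le) hσ hS
        have hbe : lam * (β j - ν j) / σ = μ j * ν j := by
          rw [← heq j]
          field_simp
        linarith
    have := hanti (left_mem_Icc.mpr ht₀t.le) (right_mem_Icc.mpr ht₀t.le) ht₀t.le
    simp only at this
    linarith [ht₀A.2]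
  -- the clamp acts trivially on u
  have hclampu : ∀ t ∈ Ici (0:ℝ), clampv ν (u t) = u t := by
    intro t ht
    funext j
    rw [clampv]
    rw [min_eq_left (hup t ht j), max_eq_right (hlow t ht j)]
  have hSu : ∀ t ∈ Ici (0:ℝ), σ ≤ fluidS β (u t) :=
    fun t ht => (hclampu t ht) ▸ hclampS (u t)
  have hGu : ∀ t ∈ Ici (0:ℝ), G (u t) = Fvec lam β μ (u t) := by
    intro t ht
    show Fvec lam β μ (clampv ν (u t)) = _
    rw [hclampu t ht]
  have hsol : IsFluidSolution lam β μ (Ici 0) u := by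
    refine ⟨hucont, fun t ht => ⟨lt_of_lt_of_le hσ (hSu t ht), fun j => ?_⟩⟩
    have hD := hasDerivWithinAt_pi.mp (huD t ht) j
    rw [hGu t ht] at hD
    exact hD
  refine ⟨u, hsol, hu0, fun t ht j => ⟨hlow t ht j, hup t ht j⟩, ?_⟩
  -- uniqueness
  intro v hv hv0 t ht
  obtain ⟨hvc, hvP⟩ := hv
  obtain ⟨Rv, hRv⟩ := isCompact_Icc.exists_bound_of_continuousOn
    (hvc.mono (Icc_subset_Ici_self : Icc (0:ℝ) t ⊆ Ici 0))
  have hScont : Continuous (fluidS β) := by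
    unfold fluidS
    exact continuous_finset_sum _ fun l _ => continuous_const.sub (continuous_apply l)
  obtain ⟨s₀, hs₀mem, hs₀min⟩ := isCompact_Icc.exists_isMinOn (nonempty_Icc.mpr ht)
    (hScont.comp_continuousOn (hvc.mono (Icc_subset_Ici_self : Icc (0:ℝ) t ⊆ Ici 0)))
  have hδv : 0 < fluidS β (v s₀) := (hvP s₀ (Icc_subset_Ici_self hs₀mem)).1
  have hR'0 : 0 ≤ max B Rv := le_trans hB0 (le_max_left _ _)
  obtain ⟨K', hK'⟩ := Fvec_lipschitzOnWith hβ hμ hlam (lt_min hσ hδv) hR'0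
  have humem : ∀ s ∈ Ico (0:ℝ) t, u s ∈
      {x : Fin J → ℝ | ‖x‖ ≤ max B Rv ∧ min σ (fluidS β (v s₀)) ≤ fluidS β x} := by
    intro s hs
    constructor
    · refine le_trans ?_ (le_max_left B Rv)
      rw [pi_norm_le_iff_of_nonneg hB0]
      intro j
      rw [Real.norm_eq_abs, abs_of_nonneg (hlow s hs.1 j)]
      exact le_trans (hup s hs.1 j) (hνB j)
    · exact le_trans (min_le_left _ _) (hSu s hs.1)
  have hvmem : ∀ s ∈ Ico (0:ℝ) t, v s ∈
      {x : Fin J → ℝ | ‖x‖ ≤ max B Rv ∧ min σ (fluidS β (v s₀)) ≤ fluidS β x} := by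
    intro s hs
    constructor
    · exact le_trans (hRv s ⟨hs.1, hs.2.le⟩) (le_max_right _ _)
    · exact le_trans (min_le_right _ _) (hs₀min ⟨hs.1, hs.2.le⟩)
  have hu' : ∀ s ∈ Ico (0:ℝ) t, HasDerivWithinAt u (Fvec lam β μ (u s)) (Ici s) s := by
    intro s hs
    exact ((hGu s hs.1) ▸ huD s hs.1).mono (Ici_subset_Ici.mpr hs.1)
  have hv' : ∀ s ∈ Ico (0:ℝ) t, HasDerivWithinAt v (Fvec lam β μ (v s)) (Ici s) s := by
    intro s hs
    have : HasDerivWithinAt v (Fvec lam β μ (v s)) (Ici 0) s :=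
      hasDerivWithinAt_pi.mpr fun j => (hvP s hs.1).2 j
    exact this.mono (Ici_subset_Ici.mpr hs.1)
  have huniq := ODE_solution_unique_of_mem_Icc_right
    (v := fun _ x => Fvec lam β μ x)
    (s := fun _ => {x : Fin J → ℝ | ‖x‖ ≤ max B Rv ∧ min σ (fluidS β (v s₀)) ≤ fluidS β x})
    (fun _ _ => hK')
    (hvc.mono (Icc_subset_Ici_self : Icc (0:ℝ) t ⊆ Ici 0)) hv' hvmem
    (hucont.mono (Icc_subset_Ici_self : Icc (0:ℝ) t ⊆ Ici 0)) hu' humem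
    (by rw [hv0, hu0])
  exact huniq (right_mem_Icc.mpr ht)
end

section
/- Every fluid solution u on [0, ∞) with u(0) = 0 satisfies 0 ≤ u(t) j ≤ ν j for all t ≥ 0 and all j. (The fluid path started from the idle state never exceeds the equilibrium point; inequality (eq-fsp-bound) of the paper.) -/
open scoped BigOperators
open Set Filter
open scoped Topology

/-- every fluid solution on `[0, ∞)` started from the idle state
satisfies `0 ≤ u(t) j ≤ ν j` for all `t ≥ 0` and `j` (bound (eq-fsp-bound)). -/
theorem pull_fluid_from_idle_below_equilibrium
    (J : ℕ) (hJ : 1 ≤ J) (β μ : Fin J → ℝ)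
    (hβ : ∀ j, 0 < β j) (hμ : ∀ j, 0 < μ j)
    (lam : ℝ) (hlam : 0 < lam) (hload : lam < ∑ j, β j * μ j)
    (ν : Fin J → ℝ)
    (hν1 : ∀ j, 0 < ν j ∧ ν j < β j)
    (hν2 : ∑ j, ν j * μ j = lam)
    (hν3 : ∀ j l, ν j * μ j / (β j - ν j) = ν l * μ l / (β l - ν l))
    (u : ℝ → Fin J → ℝ)
    (hu : IsFluidSolution lam β μ (Ici 0) u) (hu0 : u 0 = 0) :
    ∀ t ∈ Ici (0:ℝ), ∀ j, 0 ≤ u t j ∧ u t j ≤ ν j := by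
  classical
  obtain ⟨hcont, hdrift⟩ := hu
  have hj0 : (0:ℕ) < J := hJ
  let j0 : Fin J := ⟨0, hj0⟩
  have hβν : ∀ l, 0 < β l - ν l := fun l => sub_pos.2 (hν1 l).2
  have hSν : 0 < fluidS β ν :=
    Finset.sum_pos (fun l _ => hβν l) ⟨j0, Finset.mem_univ _⟩
  -- the key equilibrium identity
  have hkey : ∀ j, μ j * ν j = lam * (β j - ν j) / fluidS β ν := by
    intro j
    set c : ℝ := ν j0 * μ j0 / (β j0 - ν j0) with hc
    have hterm : ∀ l, ν l * μ l = c * (β l - ν l) :=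
      fun l => (div_eq_iff (hβν l).ne').1 (hν3 l j0)
    have hlamc : lam = c * fluidS β ν := by
      rw [← hν2]
      unfold fluidS
      rw [Finset.mul_sum]
      exact Finset.sum_congr rfl fun l _ => hterm l
    have hcval : c = lam / fluidS β ν := by
      rw [hlamc, mul_div_assoc, div_self hSν.ne', mul_one]
    rw [mul_comm, hterm j, hcval, div_mul_eq_mul_div]
  have hcj : ∀ j, ContinuousOn (fun s => u s j) (Ici (0:ℝ)) :=
    fun j => (continuous_apply j).comp_continuousOn hcont
  have hD : ∀ t, 0 < t → ∀ j,
      HasDerivAt (fun s => u s j) (fluidF lam β μ j (u t)) t :=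
    fun t ht j => ((hdrift t (le_of_lt ht)).2 j).hasDerivAt (Ici_mem_nhds ht)
  -- LOWER BOUND
  have hlower : ∀ t ∈ Ici (0:ℝ), ∀ j, 0 ≤ u t j := by
    intro t ht j
    by_contra hneg
    push_neg at hneg
    have ht0 : 0 < t := by
      rcases eq_or_lt_of_le (mem_Ici.mp ht) with h | h
      · exfalso; rw [← h] at hneg; simp [hu0] at hneg
      · exact h
    set A : Set ℝ := Icc 0 t ∩ (fun s => u s j) ⁻¹' Ici (0:ℝ) with hA
    have hAclosed : IsClosed A :=
      ContinuousOn.preimage_isClosed_of_isClosed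
        ((hcj j).mono (fun s hs => hs.1)) isClosed_Icc isClosed_Ici
    have hAne : A.Nonempty := ⟨0, ⟨le_refl 0, ht0.le⟩, by simp [hu0]⟩
    have hAbdd : BddAbove A := ⟨t, fun s hs => hs.1.2⟩
    set t2 := sSup A with ht2def
    have ht2A : t2 ∈ A := hAclosed.csSup_mem hAne hAbdd
    have ht2le : t2 ≤ t := ht2A.1.2
    have ht2g : (0:ℝ) ≤ u t2 j := ht2A.2
    have ht2lt : t2 < t := by
      rcases eq_or_lt_of_le ht2le with h | h
      · exfalso; rw [h] at ht2g; linarith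
      · exact h
    have hneg' : ∀ s, t2 < s → s ≤ t → u s j < 0 := by
      intro s hs1 hs2
      by_contra h
      push_neg at h
      have hsA : s ∈ A := ⟨⟨le_trans ht2A.1.1 hs1.le, hs2⟩, h⟩
      exact absurd (le_csSup hAbdd hsA) (not_le.2 hs1)
    have hmono : StrictMonoOn (fun s => u s j) (Icc t2 t) := by
      apply strictMonoOn_of_deriv_pos (convex_Icc t2 t)
      · exact (hcj j).mono (fun s hs => le_trans ht2A.1.1 hs.1)
      · intro s hs
        rw [interior_Icc] at hs
        have hspos : 0 < s := lt_of_le_of_lt ht2A.1.1 hs.1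
        rw [(hD s hspos j).deriv]
        have hS := (hdrift s hspos.le).1
        have hgs : u s j < 0 := hneg' s hs.1 hs.2.le
        have h1 : 0 < lam * (β j - u s j) / fluidS β (u s) :=
          div_pos (mul_pos hlam (by linarith [hβ j])) hS
        have h2 : μ j * u s j < 0 := mul_neg_of_pos_of_neg (hμ j) hgs
        unfold fluidF
        linarith
    have := hmono ⟨le_refl t2, ht2le⟩ ⟨ht2le, le_refl t⟩ ht2lt
    simp only at this
    linarith
  -- UPPER BOUND
  have hupper : ∀ t ∈ Ici (0:ℝ), ∀ j, u t j ≤ ν j := by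
    intro t ht j
    by_contra hgt
    push_neg at hgt
    have ht0 : 0 < t := by
      rcases eq_or_lt_of_le (mem_Ici.mp ht) with h | h
      · exfalso; rw [← h] at hgt; simp [hu0] at hgt; linarith [(hν1 j).1]
      · exact h
    set E : Set ℝ := ⋃ l, (Icc 0 t ∩ (fun s => u s l) ⁻¹' Ici (ν l)) with hE
    have hEmem : ∀ s, s ∈ E ↔ (s ∈ Icc 0 t ∧ ∃ l, ν l ≤ u s l) := by
      intro s
      simp only [hE, mem_iUnion, mem_inter_iff, mem_preimage, mem_Ici]
      constructor
      · rintro ⟨l, hl1, hl2⟩; exact ⟨hl1, l, hl2⟩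
      · rintro ⟨h1, l, h2⟩; exact ⟨l, h1, h2⟩
    have hEclosed : IsClosed E :=
      isClosed_iUnion_of_finite fun l =>
        ContinuousOn.preimage_isClosed_of_isClosed
          ((hcj l).mono (fun s hs => hs.1)) isClosed_Icc isClosed_Ici
    have hEne : E.Nonempty := ⟨t, (hEmem t).2 ⟨⟨ht0.le, le_refl t⟩, ⟨j, hgt.le⟩⟩⟩
    have hEbdd : BddBelow E := ⟨0, fun s hs => ((hEmem s).1 hs).1.1⟩
    set t0 := sInf E with ht0def
    have ht0E := (hEmem t0).1 (hEclosed.csInf_mem hEne hEbdd)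
    have ht0mem : t0 ∈ Icc 0 t := ht0E.1
    have ht0pos : 0 < t0 := by
      rcases eq_or_lt_of_le ht0mem.1 with h | h
      · exfalso
        obtain ⟨l, hl⟩ := ht0E.2
        rw [← h] at hl; simp [hu0] at hl; linarith [(hν1 l).1]
      · exact h
    have hlt : ∀ s, 0 ≤ s → s < t0 → ∀ l, u s l < ν l := by
      intro s hs0 hst0 l
      by_contra h
      push_neg at h
      have hsE : s ∈ E := (hEmem s).2 ⟨⟨hs0, le_trans hst0.le ht0mem.2⟩, ⟨l, h⟩⟩
      exact absurd (csInf_le hEbdd hsE) (not_le.2 hst0)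
    have hle : ∀ l, u t0 l ≤ ν l := by
      intro l
      by_contra h
      push_neg at h
      have hca : ContinuousAt (fun s => u s l) t0 :=
        (hcj l t0 ht0pos.le).continuousAt (Ici_mem_nhds ht0pos)
      have htd : Tendsto (fun s => u s l) (𝓝[<] t0) (𝓝 (u t0 l)) :=
        hca.tendsto.mono_left nhdsWithin_le_nhds
      have hev : ∀ᶠ s in 𝓝[<] t0, ν l < u s l := htd.eventually_const_lt h
      have hev2 : ∀ᶠ s in 𝓝[<] t0, s ∈ Ioo 0 t0 :=
        eventually_mem_set.mpr (Ioo_mem_nhdsLT ht0pos)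
      obtain ⟨s, hs1, hs2⟩ := (hev.and hev2).exists
      exact absurd hs1 (not_lt.2 (hlt s hs2.1.le hs2.2 l).le)
    obtain ⟨j1, hj1⟩ := ht0E.2
    have heq : u t0 j1 = ν j1 := le_antisymm (hle j1) hj1
    -- Gronwall-type lower bound on V = S(u) - S(ν)
    set C : ℝ := ∑ l, μ l with hC
    have hCge : ∀ l, μ l ≤ C :=
      fun l => Finset.single_le_sum (fun i _ => (hμ i).le) (Finset.mem_univ l)
    set V : ℝ → ℝ := fun s => ∑ l, (ν l - u s l) with hV
    set W : ℝ → ℝ := fun s => V s * Real.exp (C * s) with hW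
    have hVcont : ContinuousOn V (Icc 0 t0) := by
      have houter : Continuous (fun v : Fin J → ℝ => ∑ l, (ν l - v l)) :=
        continuous_finset_sum _ fun l _ => continuous_const.sub (continuous_apply l)
      exact houter.comp_continuousOn
        (hcont.mono (fun s hs => hs.1))
    have hWcont : ContinuousOn W (Icc 0 t0) :=
      hVcont.mul ((Real.continuous_exp.comp (continuous_const.mul continuous_id)).continuousOn)
    have hVd : ∀ s, 0 < s →
        HasDerivAt V (∑ l, (0 - fluidF lam β μ l (u s))) s := by
      intro s hs
      exact HasDerivAt.fun_sum fun l _ => (hasDerivAt_const s (ν l)).sub (hD s hs l)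
    have hWd : ∀ s, 0 < s →
        HasDerivAt W ((∑ l, (0 - fluidF lam β μ l (u s))) * Real.exp (C * s)
          + V s * (Real.exp (C * s) * (C * 1))) s := by
      intro s hs
      exact (hVd s hs).mul ((hasDerivAt_id' s).const_mul C).exp
    have hderivkey : ∀ s, 0 < s → s < t0 →
        0 ≤ (∑ l, (0 - fluidF lam β μ l (u s))) * Real.exp (C * s)
          + V s * (Real.exp (C * s) * (C * 1)) := by
      intro s hs1 hs2
      have hS := (hdrift s hs1.le).1
      have hsum : (∑ l, (0 - fluidF lam β μ l (u s)))
          = (∑ l, μ l * u s l) - lam := by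
        have h1 : ∑ l, lam * (β l - u s l) / fluidS β (u s) = lam := by
          rw [← Finset.sum_div, ← Finset.mul_sum]
          show lam * fluidS β (u s) / fluidS β (u s) = lam
          rw [mul_div_assoc, div_self hS.ne', mul_one]
        calc (∑ l, (0 - fluidF lam β μ l (u s)))
            = (∑ l, (μ l * u s l - lam * (β l - u s l) / fluidS β (u s))) := by
              apply Finset.sum_congr rfl; intro l _; unfold fluidF; ring
          _ = (∑ l, μ l * u s l) - ∑ l, lam * (β l - u s l) / fluidS β (u s) :=
              Finset.sum_sub_distrib _ _
          _ = (∑ l, μ l * u s l) - lam := by rw [h1]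
      have hkey2 : 0 ≤ (∑ l, (0 - fluidF lam β μ l (u s))) + C * V s := by
        have heq2 : (∑ l, (0 - fluidF lam β μ l (u s))) + C * V s
            = ∑ l, (C - μ l) * (ν l - u s l) := by
          rw [hsum, ← hν2, hV]
          rw [Finset.mul_sum, ← Finset.sum_sub_distrib, ← Finset.sum_add_distrib]
          apply Finset.sum_congr rfl; intro l _; ring
        rw [heq2]
        exact Finset.sum_nonneg fun l _ =>
          mul_nonneg (sub_nonneg.2 (hCge l)) (sub_nonneg.2 (hlt s hs1.le hs2 l).le)
      nlinarith [mul_nonneg hkey2 (Real.exp_pos (C * s)).le]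
    have hWmono : MonotoneOn W (Icc 0 t0) := by
      apply monotoneOn_of_deriv_nonneg (convex_Icc 0 t0) hWcont
      · intro s hs
        rw [interior_Icc] at hs
        exact ((hWd s hs.1).differentiableAt).differentiableWithinAt
      · intro s hs
        rw [interior_Icc] at hs
        rw [(hWd s hs.1).deriv]
        exact hderivkey s hs.1 hs.2
    have hV0 : V 0 = ∑ l, ν l := by simp [hV, hu0]
    have hV0pos : 0 < V 0 := by
      rw [hV0]
      exact Finset.sum_pos (fun l _ => (hν1 l).1) ⟨j0, Finset.mem_univ _⟩
    have hW0 : W 0 ≤ W t0 :=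
      hWmono ⟨le_refl 0, ht0pos.le⟩ ⟨ht0pos.le, le_refl t0⟩ ht0pos.le
    have hWat0 : W 0 = V 0 := by simp [hW]
    have hVt0pos : 0 < V t0 := by
      by_contra h
      push_neg at h
      have : W t0 ≤ 0 := mul_nonpos_of_nonpos_of_nonneg h (Real.exp_pos _).le
      rw [hWat0] at hW0
      linarith
    have hSgt : fluidS β ν < fluidS β (u t0) := by
      have hsplit : fluidS β (u t0) = fluidS β ν + V t0 := by
        unfold fluidS
        rw [hV, ← Finset.sum_add_distrib]
        apply Finset.sum_congr rfl; intro l _; ring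
      linarith
    have hF : fluidF lam β μ j1 (u t0) < 0 := by
      unfold fluidF
      rw [heq]
      have h1 : lam * (β j1 - ν j1) / fluidS β (u t0)
          < lam * (β j1 - ν j1) / fluidS β ν :=
        div_lt_div_of_pos_left (mul_pos hlam (hβν j1)) hSν hSgt
      linarith [hkey j1]
    -- derivative negative at a left max: contradiction with values strictly below
    have hg := hD t0 ht0pos j1
    have hslope : Tendsto (slope (fun s => u s j1) t0) (𝓝[<] t0)
        (𝓝 (fluidF lam β μ j1 (u t0))) :=
      (hasDerivAt_iff_tendsto_slope.1 hg).mono_left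
        (nhdsWithin_mono _ fun x hx => ne_of_lt hx)
    have hev : ∀ᶠ s in 𝓝[<] t0, slope (fun s => u s j1) t0 s < 0 :=
      hslope.eventually_lt_const hF
    have hev2 : ∀ᶠ s in 𝓝[<] t0, s ∈ Ioo 0 t0 :=
      eventually_mem_set.mpr (Ioo_mem_nhdsLT ht0pos)
    obtain ⟨s, hs1, hs2⟩ := (hev.and hev2).exists
    rw [slope_def_field] at hs1
    have hst : s - t0 < 0 := by linarith [hs2.2]
    have hpos : 0 < u s j1 - u t0 j1 := by
      rcases div_neg_iff.1 hs1 with ⟨h1, h2⟩ | ⟨h1, h2⟩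
      · exact h1
      · linarith
    have := hlt s hs2.1.le hs2.2 j1
    rw [heq] at hpos
    linarith
  intro t ht j
  exact ⟨hlower t ht j, hupper t ht j⟩
end

section
/- Every fluid solution u on [0, ∞) with u(0) = 0 is componentwise nondecreasing in time: for all 0 ≤ s ≤ t and every j, u(s) j ≤ u(t) j. (Monotonicity of the fluid path starting from the idle state; Lemma 4(v) of the paper.) -/
open scoped BigOperators
open Set Filter
open scoped Topology

/-- Auxiliary function: `ψ j t = μ j u_j(t) S(u(t)) − λ (β j − u_j(t)) = −S(u(t)) F_j(u(t))`. -/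
noncomputable def psiAux {J : ℕ} (lam : ℝ) (β μ : Fin J → ℝ)
    (u : ℝ → Fin J → ℝ) (j : Fin J) (t : ℝ) : ℝ :=
  μ j * u t j * fluidS β (u t) - lam * (β j - u t j)

/-- every fluid solution on `[0, ∞)` started from the idle state
is componentwise nondecreasing in time (Lemma 4(v)). -/
theorem pull_fluid_from_idle_monotone
    (J : ℕ) (hJ : 1 ≤ J) (β μ : Fin J → ℝ)
    (hβ : ∀ j, 0 < β j) (hμ : ∀ j, 0 < μ j)
    (lam : ℝ) (hlam : 0 < lam) (hload : lam < ∑ j, β j * μ j)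
    (u : ℝ → Fin J → ℝ)
    (hu : IsFluidSolution lam β μ (Ici 0) u) (hu0 : u 0 = 0) :
    ∀ s t : ℝ, 0 ≤ s → s ≤ t → ∀ j, u s j ≤ u t j := by
  obtain ⟨hcont, hprop⟩ := hu
  have hS : ∀ t ∈ Ici (0:ℝ), 0 < fluidS β (u t) := fun t ht => (hprop t ht).1
  have hderiv : ∀ t ∈ Ici (0:ℝ), ∀ j,
      HasDerivWithinAt (fun s => u s j) (fluidF lam β μ j (u t)) (Ici 0) t :=
    fun t ht => (hprop t ht).2
  have hcoord : ∀ j, ContinuousOn (fun t => u t j) (Ici 0) :=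
    fun j => (continuous_apply j).comp_continuousOn hcont
  have hScont : ContinuousOn (fun t => fluidS β (u t)) (Ici 0) := by
    unfold fluidS
    exact continuousOn_finset_sum _ fun l _ => continuousOn_const.sub (hcoord l)
  set ψ : Fin J → ℝ → ℝ := psiAux lam β μ u with hψdef
  have hψcont : ∀ j, ContinuousOn (ψ j) (Ici 0) := by
    intro j
    exact ((continuousOn_const.mul (hcoord j)).mul hScont).sub
      (continuousOn_const.mul (continuousOn_const.sub (hcoord j)))
  -- F in terms of ψ
  have hFψ : ∀ t ∈ Ici (0:ℝ), ∀ j,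
      fluidF lam β μ j (u t) = -(ψ j t) / fluidS β (u t) := by
    intro t ht j
    have hs := (hS t ht).ne'
    simp only [hψdef, psiAux, fluidF]
    field_simp
    ring
  -- derivative of S ∘ u
  have hSderiv : ∀ t ∈ Ici (0:ℝ),
      HasDerivWithinAt (fun s => fluidS β (u s))
        ((∑ l, ψ l t) / fluidS β (u t)) (Ici 0) t := by
    intro t ht
    have h1 : HasDerivWithinAt (fun s => fluidS β (u s))
        (∑ l, -(fluidF lam β μ l (u t))) (Ici 0) t := by
      unfold fluidS
      exact HasDerivWithinAt.fun_sum fun l _ => (hderiv t ht l).const_sub (β l)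
    convert h1 using 1
    rw [Finset.sum_div]
    refine Finset.sum_congr rfl fun l _ => ?_
    rw [hFψ t ht l]
    rw [neg_div, neg_neg]
  -- derivative of ψ j
  have hψderiv : ∀ t ∈ Ici (0:ℝ), ∀ j,
      HasDerivWithinAt (ψ j)
        ((μ j * fluidF lam β μ j (u t)) * fluidS β (u t)
          + (μ j * u t j) * ((∑ l, ψ l t) / fluidS β (u t))
          - lam * -(fluidF lam β μ j (u t))) (Ici 0) t := by
    intro t ht j
    exact (((hderiv t ht j).const_mul (μ j)).mul (hSderiv t ht)).sub
      (((hderiv t ht j).const_sub (β j)).const_mul lam)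
  -- initial value
  have hψ0 : ∀ j, ψ j 0 = -(lam * β j) := by
    intro j
    simp only [hψdef, psiAux, hu0, Pi.zero_apply, mul_zero, zero_mul, sub_zero]
    ring
  have hψ0neg : ∀ j, ψ j 0 < 0 := by
    intro j
    rw [hψ0]
    have := mul_pos hlam (hβ j)
    linarith
  -- main invariance claim
  have key : ∀ t ∈ Ici (0:ℝ), ∀ j, ψ j t < 0 := by
    by_contra hcon
    push_neg at hcon
    obtain ⟨t₁, ht₁, j₁, hj₁⟩ := hcon
    set A : Set ℝ := ⋃ j, (Ici 0 ∩ ψ j ⁻¹' Ici 0) with hAdef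
    have hAclosed : IsClosed A :=
      isClosed_iUnion_of_finite fun j =>
        (hψcont j).preimage_isClosed_of_isClosed isClosed_Ici isClosed_Ici
    have hAne : A.Nonempty := ⟨t₁, mem_iUnion.2 ⟨j₁, ht₁, hj₁⟩⟩
    have hAbdd : BddBelow A := ⟨0, by
      rintro x hx
      obtain ⟨j, hj⟩ := mem_iUnion.1 hx
      exact hj.1⟩
    set T := sInf A with hTdef
    have hTA : T ∈ A := hAclosed.csInf_mem hAne hAbdd
    obtain ⟨j₀, hT0', hψT⟩ : ∃ j₀, T ∈ Ici (0:ℝ) ∧ 0 ≤ ψ j₀ T := by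
      obtain ⟨j, hj⟩ := mem_iUnion.1 hTA
      exact ⟨j, hj.1, hj.2⟩
    have hT0 : (0:ℝ) ≤ T := hT0'
    have hTpos : 0 < T := by
      rcases hT0.lt_or_eq with h | h
      · exact h
      · exact absurd hψT (by rw [← h]; exact not_le.2 (hψ0neg j₀))
    have hbefore : ∀ x, 0 ≤ x → x < T → ∀ j, ψ j x < 0 := by
      intro x hx hxT j
      by_contra h
      push_neg at h
      have hxA : x ∈ A := mem_iUnion.2 ⟨j, hx, h⟩
      exact absurd (csInf_le hAbdd hxA) (not_le.2 hxT)
    -- left limits: ψ k T ≤ 0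
    have hψTle : ∀ k, ψ k T ≤ 0 := by
      intro k
      have hc : Tendsto (ψ k) (𝓝[Ioo 0 T] T) (𝓝 (ψ k T)) :=
        ((hψcont k) T hT0').mono fun x hx => le_of_lt hx.1
      rw [nhdsWithin_Ioo_eq_nhdsLT hTpos] at hc
      refine le_of_tendsto hc ?_
      filter_upwards [Ioo_mem_nhdsLT_of_mem (by exact ⟨hTpos, le_refl T⟩ : T ∈ Ioc (0:ℝ) T)]
        with x hx
      exact (hbefore x hx.1.le hx.2 k).le
    -- ψ nonpositive on [0,T]
    have hψle : ∀ x ∈ Icc (0:ℝ) T, ∀ j, ψ j x ≤ 0 := by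
      intro x hx j
      rcases hx.2.lt_or_eq with h | h
      · exact (hbefore x hx.1 h j).le
      · rw [h]; exact hψTle j
    have hSig : ∀ x ∈ Icc (0:ℝ) T, (∑ l, ψ l x) ≤ 0 := fun x hx =>
      Finset.sum_nonpos fun l _ => hψle x hx l
    -- u nonnegative on [0,T]
    have hDA : ∀ x : ℝ, 0 < x → ∀ j,
        HasDerivAt (fun s => u s j) (fluidF lam β μ j (u x)) x :=
      fun x hx j => (hderiv x hx.le j).hasDerivAt (Ici_mem_nhds hx)
    have hu_nonneg : ∀ x ∈ Icc (0:ℝ) T, ∀ j, 0 ≤ u x j := by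
      intro x hx j
      have hmono : MonotoneOn (fun s => u s j) (Icc 0 T) := by
        apply monotoneOn_of_deriv_nonneg (convex_Icc 0 T)
          ((hcoord j).mono Icc_subset_Ici_self)
        · intro y hy
          rw [interior_Icc] at hy
          exact (hDA y hy.1 j).differentiableAt.differentiableWithinAt
        · intro y hy
          rw [interior_Icc] at hy
          rw [(hDA y hy.1 j).deriv, hFψ y hy.1.le j]
          exact div_nonneg (neg_nonneg.2 (hbefore y hy.1.le hy.2 j).le) (hS y hy.1.le).le
      have h0 : u 0 j = 0 := by rw [hu0]; rfl
      have hmm := hmono (left_mem_Icc.2 hT0) hx hx.1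
      simp only [h0] at hmm
      exact hmm
    -- bound for the coefficient
    obtain ⟨C, hC⟩ : ∃ C, ∀ x ∈ Icc (0:ℝ) T, lam / fluidS β (u x) + μ j₀ ≤ C := by
      have hcontA : ContinuousOn (fun x => lam / fluidS β (u x) + μ j₀) (Icc 0 T) := by
        refine ContinuousOn.add ?_ continuousOn_const
        exact continuousOn_const.div (hScont.mono Icc_subset_Ici_self)
          fun x hx => (hS x hx.1).ne'
      obtain ⟨C, hC⟩ := (isCompact_Icc : IsCompact (Icc (0:ℝ) T)).exists_bound_of_continuousOn hcontA
      exact ⟨C, fun x hx => (le_abs_self _).trans (by simpa using hC x hx)⟩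
    -- the function g = ψ j₀ · exp(C·) is antitone on [0,T]
    set g : ℝ → ℝ := fun x => ψ j₀ x * Real.exp (C * x) with hgdef
    have hganti : AntitoneOn g (Icc 0 T) := by
      have hgderiv : ∀ y ∈ Ioo (0:ℝ) T, HasDerivAt g
          (((μ j₀ * fluidF lam β μ j₀ (u y)) * fluidS β (u y)
            + (μ j₀ * u y j₀) * ((∑ l, ψ l y) / fluidS β (u y))
            - lam * -(fluidF lam β μ j₀ (u y))) * Real.exp (C * y)
            + ψ j₀ y * (Real.exp (C * y) * C)) y := by
        intro y hy
        have h1 : HasDerivAt (ψ j₀) _ y :=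
          (hψderiv y hy.1.le j₀).hasDerivAt (Ici_mem_nhds hy.1)
        have h2 : HasDerivAt (fun x => Real.exp (C * x)) (Real.exp (C * y) * C) y := by
          simpa using (HasDerivAt.exp ((hasDerivAt_id y).const_mul C))
        exact h1.mul h2
      apply antitoneOn_of_deriv_nonpos (convex_Icc 0 T)
      · exact (((hψcont j₀).mono Icc_subset_Ici_self).mul
          (Real.continuous_exp.comp (continuous_const.mul continuous_id)).continuousOn)
      · intro y hy
        rw [interior_Icc] at hy
        exact (hgderiv y hy).differentiableAt.differentiableWithinAt
      · intro y hy
        rw [interior_Icc] at hy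
        rw [(hgderiv y hy).deriv]
        -- abbreviations
        have hy0 : (0:ℝ) ≤ y := hy.1.le
        have hyIcc : y ∈ Icc (0:ℝ) T := ⟨hy0, hy.2.le⟩
        have hSy : 0 < fluidS β (u y) := hS y hy0
        have hψy : ψ j₀ y ≤ 0 := (hbefore y hy0 hy.2 j₀).le
        have hSigy : (∑ l, ψ l y) ≤ 0 := hSig y hyIcc
        have huy : 0 ≤ u y j₀ := hu_nonneg y hyIcc j₀
        have hCy : lam / fluidS β (u y) + μ j₀ ≤ C := hC y hyIcc
        have hE : 0 < Real.exp (C * y) := Real.exp_pos _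
        have hFeq : fluidF lam β μ j₀ (u y) = -(ψ j₀ y) / fluidS β (u y) :=
          hFψ y hy0 j₀
        set Sy := fluidS β (u y)
        set py := ψ j₀ y
        set Sigy := ∑ l, ψ l y
        set uy := u y j₀
        rw [hFeq]
        -- derivative rewritten
        have hD : (μ j₀ * (-py / Sy)) * Sy + (μ j₀ * uy) * (Sigy / Sy)
            - lam * -(-py / Sy)
            = -(μ j₀) * py + (μ j₀ * uy) * Sigy / Sy - lam * py / Sy := by
          field_simp
        rw [hD]
        -- bound: (ψ' + C ψ) ≤ 0
        have hterm1 : (μ j₀ * uy) * Sigy / Sy ≤ 0 := by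
          apply div_nonpos_of_nonpos_of_nonneg _ hSy.le
          exact mul_nonpos_of_nonneg_of_nonpos (mul_nonneg (hμ j₀).le huy) hSigy
        have hterm2 : py * C ≤ py * (lam / Sy + μ j₀) :=
          mul_le_mul_of_nonpos_left hCy hψy
        have hterm2' : py * (lam / Sy + μ j₀) = lam * py / Sy + μ j₀ * py := by
          field_simp
        have hsum : (-(μ j₀) * py + (μ j₀ * uy) * Sigy / Sy - lam * py / Sy) + C * py ≤ 0 := by
          have := hterm2.trans_eq hterm2'
          linarith
        nlinarith [mul_nonpos_of_nonpos_of_nonneg hsum hE.le]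
    -- contradiction
    have hgT : g T ≤ g 0 := hganti (left_mem_Icc.2 hT0) (right_mem_Icc.2 hT0) hT0
    have hg0 : g 0 < 0 := by
      simp only [hgdef, mul_zero, Real.exp_zero, mul_one]
      exact hψ0neg j₀
    have hgTpos : 0 ≤ g T := mul_nonneg hψT (Real.exp_pos _).le
    linarith
  -- conclusion: each coordinate is monotone on [0, ∞)
  intro s t hs hst j
  have hmono : MonotoneOn (fun r => u r j) (Ici 0) := by
    apply monotoneOn_of_deriv_nonneg (convex_Ici 0) (hcoord j)
    · intro y hy
      rw [interior_Ici, mem_Ioi] at hy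
      exact ((hderiv y hy.le j).hasDerivAt (Ici_mem_nhds hy)).differentiableAt.differentiableWithinAt
    · intro y hy
      rw [interior_Ici, mem_Ioi] at hy
      rw [((hderiv y hy.le j).hasDerivAt (Ici_mem_nhds hy)).deriv, hFψ y hy.le j]
      exact div_nonneg (neg_nonneg.2 (key y hy.le j).le) (hS y hy.le).le
  exact hmono hs (hs.trans hst) hst
end

section
/- For every fluid solution u on [0, ∞) with u(0) = 0 and every j, u(t) j converges to ν j as t → ∞. (Convergence of the fluid path from the idle state to the equilibrium point; Lemma 4(v) of the paper.) -/
open scoped BigOperators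
open Set Filter

/-- every fluid solution on `[0, ∞)` started from the idle state
converges to the equilibrium point `ν` as `t → ∞` (Lemma 4(v)). -/
theorem pull_fluid_from_idle_converges
    (J : ℕ) (hJ : 1 ≤ J) (β μ : Fin J → ℝ)
    (hβ : ∀ j, 0 < β j) (hμ : ∀ j, 0 < μ j)
    (lam : ℝ) (hlam : 0 < lam) (hload : lam < ∑ j, β j * μ j)
    (ν : Fin J → ℝ)
    (hν1 : ∀ j, 0 < ν j ∧ ν j < β j)
    (hν2 : ∑ j, ν j * μ j = lam)
    (hν3 : ∀ j l, ν j * μ j / (β j - ν j) = ν l * μ l / (β l - ν l))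
    (u : ℝ → Fin J → ℝ)
    (hu : IsFluidSolution lam β μ (Ici 0) u) (hu0 : u 0 = 0) :
    ∀ j, Tendsto (fun t => u t j) atTop (nhds (ν j)) := by
  obtain ⟨hcont, hdyn⟩ := hu
  haveI hJne : Nonempty (Fin J) := Fin.pos_iff_nonempty.mp hJ
  set Sstar : ℝ := fluidS β ν with hSstar_def
  have hSstar : 0 < Sstar :=
    Finset.sum_pos (fun l _ => sub_pos.mpr (hν1 l).2) Finset.univ_nonempty
  set cstar : ℝ := lam / Sstar with hcstar_def
  have hcstar : 0 < cstar := div_pos hlam hSstar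
  -- equilibrium identity
  have heq : ∀ j, μ j * ν j = cstar * (β j - ν j) := by
    intro j
    have hbj : (0:ℝ) < β j - ν j := sub_pos.mpr (hν1 j).2
    have hratio : ∀ l, ν l * μ l = ν j * μ j / (β j - ν j) * (β l - ν l) := by
      intro l
      have hbl : (0:ℝ) < β l - ν l := sub_pos.mpr (hν1 l).2
      rw [hν3 j l]
      field_simp
    have hsum : lam = ν j * μ j / (β j - ν j) * Sstar := by
      rw [← hν2, hSstar_def, fluidS, Finset.mul_sum]
      exact Finset.sum_congr rfl fun l _ => hratio l
    have hdiv : ν j * μ j / (β j - ν j) = cstar := by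
      rw [hcstar_def, hsum]
      field_simp
    rw [← hdiv]
    field_simp
  -- coordinates
  have hcj : ∀ j, ContinuousOn (fun s => u s j) (Ici (0:ℝ)) :=
    fun j => (continuous_apply j).comp_continuousOn hcont
  have hdj : ∀ t, 0 ≤ t → ∀ j,
      HasDerivWithinAt (fun s => u s j) (fluidF lam β μ j (u t)) (Ici 0) t :=
    fun t ht j => (hdyn t ht).2 j
  have hdj' : ∀ t, 0 < t → ∀ j,
      HasDerivAt (fun s => u s j) (fluidF lam β μ j (u t)) t :=
    fun t ht j => (hdj t ht.le j).hasDerivAt (Ici_mem_nhds ht)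
  have hSpos : ∀ t, 0 ≤ t → 0 < fluidS β (u t) := fun t ht => (hdyn t ht).1
  have hu0j : ∀ j, u 0 j = 0 := fun j => congrFun hu0 j
  have hFeq : ∀ t j, fluidF lam β μ j (u t) =
      lam / fluidS β (u t) * (β j - u t j) - μ j * u t j := by
    intro t j; rw [fluidF, mul_div_right_comm]
  have hμν : ∑ j, μ j * ν j = lam := by
    rw [← hν2]; exact Finset.sum_congr rfl fun j _ => mul_comm _ _
  -- ################ invariance ################
  have hbox : ∀ t, 0 ≤ t → ∀ j, 0 ≤ u t j ∧ u t j ≤ ν j := by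
    by_contra hcon
    push_neg at hcon
    obtain ⟨t₀, ht₀, j₀, hj₀⟩ := hcon
    have hbad : u t₀ j₀ < 0 ∨ ν j₀ < u t₀ j₀ := by
      rcases lt_or_ge (u t₀ j₀) 0 with h | h
      · exact Or.inl h
      · exact Or.inr (hj₀ h)
    set B : Set ℝ := {t | 0 ≤ t ∧ ∃ j, u t j < 0 ∨ ν j < u t j} with hBdef
    have hBne : B.Nonempty := ⟨t₀, ht₀, j₀, hbad⟩
    have hBbd : BddBelow B := ⟨0, fun b hb => hb.1⟩
    set T := sInf B with hTdef
    have hT0 : 0 ≤ T := le_csInf hBne fun b hb => hb.1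
    have hTleB : ∀ b ∈ B, T ≤ b := fun b hb => csInf_le hBbd hb
    have hPlt : ∀ s, 0 ≤ s → s < T → ∀ j, 0 ≤ u s j ∧ u s j ≤ ν j := by
      intro s hs0 hsT j
      by_contra h
      have hsB : s ∈ B := by
        refine ⟨hs0, j, ?_⟩
        rcases lt_or_ge (u s j) 0 with h1 | h1
        · exact Or.inl h1
        · right; by_contra h2; push_neg at h2; exact h ⟨h1, h2⟩
      exact absurd (hTleB s hsB) (not_le.mpr hsT)
    have hTnotB : T ∉ B := by
      intro hTB
      obtain ⟨-, j, hj⟩ := hTB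
      have hTpos : 0 < T := by
        rcases hT0.lt_or_eq with h | h
        · exact h
        · exfalso
          rw [← h] at hj
          rcases hj with h1 | h1
          · rw [hu0j j] at h1; exact absurd h1 (lt_irrefl 0)
          · rw [hu0j j] at h1; exact absurd h1 (not_lt.mpr (hν1 j).1.le)
      have hca : ContinuousAt (fun s => u s j) T :=
        (hcj j).continuousAt (Ici_mem_nhds hTpos)
      have hev : ∀ᶠ s in nhds T, s ∈ B := by
        have h0 : ∀ᶠ s in nhds T, 0 < s := eventually_gt_nhds hTpos
        rcases hj with h1 | h1
        · filter_upwards [hca.eventually_lt_const h1, h0] with s hs hs0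
          exact ⟨hs0.le, j, Or.inl hs⟩
        · filter_upwards [hca.eventually_const_lt h1, h0] with s hs hs0
          exact ⟨hs0.le, j, Or.inr hs⟩
      have hev' : ∀ᶠ s in nhdsWithin T (Iio T), s ∈ B :=
        hev.filter_mono nhdsWithin_le_nhds
      obtain ⟨s, hsB, hsT⟩ := (hev'.and self_mem_nhdsWithin).exists
      exact absurd (hTleB s hsB) (not_le.mpr hsT)
    have hPT : ∀ j, 0 ≤ u T j ∧ u T j ≤ ν j := by
      intro j
      by_contra h
      apply hTnotB
      refine ⟨hT0, j, ?_⟩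
      rcases lt_or_ge (u T j) 0 with h1 | h1
      · exact Or.inl h1
      · right; by_contra h2; push_neg at h2; exact h ⟨h1, h2⟩
    have hPIcc : ∀ s ∈ Icc (0:ℝ) T, ∀ j, 0 ≤ u s j ∧ u s j ≤ ν j := by
      intro s hs j
      rcases hs.2.lt_or_eq with h | h
      · exact hPlt s hs.1 h j
      · rw [h]; exact hPT j
    -- strict upper bound at T
    have hstrict : ∀ j, u T j < ν j := by
      intro j
      have hmono : MonotoneOn (fun s => (ν j - u s j) * Real.exp ((cstar + μ j) * s))
          (Icc 0 T) := by
        refine monotoneOn_of_hasDerivWithinAt_nonneg (convex_Icc 0 T)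
          (f' := fun x => Real.exp ((cstar + μ j) * x) *
            ((cstar - lam / fluidS β (u x)) * (β j - u x j))) ?hc ?hd ?hnn
        case hc =>
          exact (continuousOn_const.sub ((hcj j).mono Icc_subset_Ici_self)).mul
            ((Real.continuous_exp.comp (continuous_const.mul continuous_id)).continuousOn)
        case hd =>
          rw [interior_Icc]
          intro x hx
          have hdx := hdj' x hx.1 j
          have h1 : HasDerivAt (fun s => ν j - u s j) (-(fluidF lam β μ j (u x))) x :=
            hdx.const_sub (ν j)
          have h2 : HasDerivAt (fun s => Real.exp ((cstar + μ j) * s))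
              (Real.exp ((cstar + μ j) * x) * (cstar + μ j)) x := by
            simpa using ((hasDerivAt_id x).const_mul (cstar + μ j)).exp
          have h4 : -(fluidF lam β μ j (u x)) * Real.exp ((cstar + μ j) * x) +
              (ν j - u x j) * (Real.exp ((cstar + μ j) * x) * (cstar + μ j)) =
              Real.exp ((cstar + μ j) * x) *
                ((cstar - lam / fluidS β (u x)) * (β j - u x j)) := by
            rw [hFeq x j]
            linear_combination Real.exp ((cstar + μ j) * x) * heq j
          have h5 : HasDerivAt (fun s => (ν j - u s j) * Real.exp ((cstar + μ j) * s))
              (Real.exp ((cstar + μ j) * x) *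
                ((cstar - lam / fluidS β (u x)) * (β j - u x j))) x := by
            rw [← h4]; exact h1.mul h2
          exact h5.hasDerivWithinAt
        case hnn =>
          rw [interior_Icc]
          intro x hx
          have hxI : x ∈ Icc (0:ℝ) T := Ioo_subset_Icc_self hx
          apply mul_nonneg (Real.exp_nonneg _)
          apply mul_nonneg
          · rw [sub_nonneg, hcstar_def]
            have hSge : Sstar ≤ fluidS β (u x) :=
              Finset.sum_le_sum fun l _ => by linarith [(hPIcc x hxI l).2]
            gcongr
          · linarith [(hPIcc x hxI j).2, (hν1 j).2]
      -- use monotonicity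
      have hg0 : (ν j - u 0 j) * Real.exp ((cstar + μ j) * 0) = ν j := by
        rw [hu0j j]; simp
      have hgT := hmono (left_mem_Icc.mpr hT0) (right_mem_Icc.mpr hT0) hT0
      beta_reduce at hgT
      rw [hg0] at hgT
      nlinarith [Real.exp_pos ((cstar + μ j) * T), (hν1 j).1]
    -- eventually in (T, ∞) the box conditions hold
    have hev : ∀ᶠ t in nhdsWithin T (Ioi T), ∀ j, 0 ≤ u t j ∧ u t j ≤ ν j := by
      rw [eventually_all]
      intro j
      have htend : Tendsto (fun s => u s j) (nhdsWithin T (Ioi T)) (nhds (u T j)) :=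
        (hcj j T hT0).mono_left
          (nhdsWithin_mono T (fun s hs => le_trans hT0 (le_of_lt hs)))
      have hub : ∀ᶠ t in nhdsWithin T (Ioi T), u t j ≤ ν j :=
        (htend.eventually_lt_const (hstrict j)).mono fun t ht => ht.le
      have hlb : ∀ᶠ t in nhdsWithin T (Ioi T), 0 ≤ u t j := by
        rcases (hPT j).1.lt_or_eq with h | h
        · exact (htend.eventually_const_lt h).mono fun t ht => ht.le
        · have hd : HasDerivWithinAt (fun s => u s j) (fluidF lam β μ j (u T)) (Ici T) T :=
            (hdj T hT0 j).mono (Ici_subset_Ici.mpr hT0)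
          have hdpos : 0 < fluidF lam β μ j (u T) := by
            rw [hFeq T j, ← h]
            simp only [sub_zero, mul_zero]
            exact mul_pos (div_pos hlam (hSpos T hT0)) (hβ j)
          rw [hasDerivWithinAt_iff_tendsto_slope, Ici_sdiff_left] at hd
          have hslope : ∀ᶠ t in nhdsWithin T (Ioi T), 0 < slope (fun s => u s j) T t :=
            hd.eventually_const_lt hdpos
          filter_upwards [hslope, self_mem_nhdsWithin] with t hts htT
          have h2 : (0:ℝ) < t - T := sub_pos.mpr htT
          have h3 := mul_pos hts h2
          have h4 : slope (fun s => u s j) T t * (t - T) = u t j - u T j := by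
            rw [slope_def_field]
            field_simp
          rw [h4] at h3
          linarith [h.symm.le, h3]
      filter_upwards [hlb, hub] with t h1 h2
      exact ⟨h1, h2⟩
    obtain ⟨v, hv, hsub⟩ := mem_nhdsGT_iff_exists_Ioc_subset.mp hev
    obtain ⟨b, hbB, hbv⟩ := (csInf_lt_iff hBbd hBne).mp (show sInf B < v from hv)
    have hTb : T < b :=
      lt_of_le_of_ne (hTleB b hbB) (fun hTb => hTnotB (by rw [hTb]; exact hbB))
    have hbP := hsub ⟨hTb, hbv.le⟩
    obtain ⟨-, j, hj⟩ := hbB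
    rcases hj with h1 | h1
    · exact absurd (hbP j).1 (not_le.mpr h1)
    · exact absurd (hbP j).2 (not_le.mpr h1)
  -- ################ monotonicity of total mass ################
  have hSgeg : ∀ t, 0 ≤ t → Sstar ≤ fluidS β (u t) := fun t ht =>
    Finset.sum_le_sum fun l _ => by linarith [(hbox t ht l).2]
  have hsumF : ∀ t, 0 ≤ t →
      ∑ j, fluidF lam β μ j (u t) = lam - ∑ j, μ j * u t j := by
    intro t ht
    have hS := (hSpos t ht).ne'
    have h1 : ∀ j, fluidF lam β μ j (u t) =
        lam * (β j - u t j) / fluidS β (u t) - μ j * u t j := fun j => rfl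
    simp only [h1]
    rw [Finset.sum_sub_distrib]
    congr 1
    rw [← Finset.sum_div, ← Finset.mul_sum]
    have h2 : ∑ j, (β j - u t j) = fluidS β (u t) := rfl
    rw [h2, mul_div_assoc, div_self hS, mul_one]
  have hgmono : MonotoneOn (fun t => ∑ j, u t j) (Ici 0) := by
    refine monotoneOn_of_hasDerivWithinAt_nonneg (convex_Ici 0)
      (f' := fun x => ∑ j, fluidF lam β μ j (u x)) ?hc1 ?hd1 ?hnn1
    case hc1 => exact continuousOn_finset_sum _ fun j _ => hcj j
    case hd1 =>
      rw [interior_Ici]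
      intro x hx
      exact (HasDerivAt.fun_sum fun j _ => hdj' x hx j).hasDerivWithinAt
    case hnn1 =>
      rw [interior_Ici]
      intro x hx
      beta_reduce
      rw [hsumF x hx.le]
      have h1 : ∑ j, μ j * u x j ≤ ∑ j, μ j * ν j :=
        Finset.sum_le_sum fun j _ =>
          mul_le_mul_of_nonneg_left (hbox x hx.le j).2 (hμ j).le
      linarith [hμν]
  set G : ℝ → ℝ := fun t => ∑ j, u (max t 0) j with hGdef
  have hGmono : Monotone G := fun a b hab =>
    hgmono (le_max_right a 0) (le_max_right b 0) (max_le_max hab le_rfl)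
  have hGbdd : BddAbove (Set.range G) := by
    refine ⟨∑ j, ν j, ?_⟩
    rintro x ⟨t, rfl⟩
    exact Finset.sum_le_sum fun j _ => (hbox _ (le_max_right t 0) j).2
  set L : ℝ := ⨆ t, G t with hLdef
  have hGtend : Tendsto G atTop (nhds L) := tendsto_atTop_ciSup hGmono hGbdd
  have hGleL : ∀ t, G t ≤ L := fun t => le_ciSup hGbdd t
  -- ################ Lipschitz bound for h ################
  set M : ℝ := ∑ j, μ j * (lam * β j / Sstar + μ j * ν j) with hMdef
  have hMpos : 0 < M :=
    Finset.sum_pos (fun j _ => mul_pos (hμ j)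
      (add_pos (div_pos (mul_pos hlam (hβ j)) hSstar) (mul_pos (hμ j) (hν1 j).1)))
      Finset.univ_nonempty
  have hFbound : ∀ t, 0 ≤ t → ∀ j,
      |fluidF lam β μ j (u t)| ≤ lam * β j / Sstar + μ j * ν j := by
    intro t ht j
    have hb1 := (hbox t ht j).1
    have hb2 := (hbox t ht j).2
    have h1 : 0 ≤ lam * (β j - u t j) / fluidS β (u t) :=
      div_nonneg (mul_nonneg hlam.le (by linarith [(hν1 j).2])) (hSpos t ht).le
    have h2 : lam * (β j - u t j) / fluidS β (u t) ≤ lam * β j / Sstar := by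
      apply div_le_div₀ (mul_nonneg hlam.le (hβ j).le) ?_ hSstar (hSgeg t ht)
      nlinarith
    have h3 : 0 ≤ μ j * u t j := mul_nonneg (hμ j).le hb1
    have h4 : μ j * u t j ≤ μ j * ν j := mul_le_mul_of_nonneg_left hb2 (hμ j).le
    have h5 : fluidF lam β μ j (u t) =
        lam * (β j - u t j) / fluidS β (u t) - μ j * u t j := rfl
    rw [h5]
    rw [abs_le]
    constructor <;> linarith
  have hLip : ∀ x, 0 ≤ x → ∀ y, 0 ≤ y →
      |(∑ j, μ j * u y j) - ∑ j, μ j * u x j| ≤ M * |y - x| := by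
    intro x hx y hy
    have hbound : ∀ t ∈ Ici (0:ℝ), ‖∑ j, μ j * fluidF lam β μ j (u t)‖ ≤ M := by
      intro t ht
      refine le_trans (norm_sum_le _ _) ?_
      rw [hMdef]
      refine Finset.sum_le_sum fun j _ => ?_
      rw [norm_mul, Real.norm_eq_abs, Real.norm_eq_abs, abs_of_pos (hμ j)]
      exact mul_le_mul_of_nonneg_left (hFbound t ht j) (hμ j).le
    have key := Convex.norm_image_sub_le_of_norm_hasDerivWithin_le
      (f := fun t => ∑ j, μ j * u t j)
      (f' := fun t => ∑ j, μ j * fluidF lam β μ j (u t))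
      (s := Ici 0)
      (fun t ht => HasDerivWithinAt.fun_sum fun j _ => (hdj t ht j).const_mul (μ j))
      hbound (convex_Ici 0) hx hy
    simpa [Real.norm_eq_abs] using key
  -- ################ Barbalat-type argument ################
  have hkey : ∀ ε, 0 < ε → ∀ᶠ t in atTop, lam - (∑ j, μ j * u t j) < ε := by
    intro ε hε
    set r : ℝ := ε / (2 * M) with hrdef
    have hrpos : 0 < r := div_pos hε (by positivity)
    have hMr2 : M * r = ε / 2 := by
      rw [hrdef]; field_simp
    have hev : ∀ᶠ t in atTop, L - G t < ε * r / 2 := by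
      have h0 : Tendsto (fun t => L - G t) atTop (nhds (L - L)) :=
        tendsto_const_nhds.sub hGtend
      rw [sub_self] at h0
      exact h0.eventually_lt_const (by positivity)
    filter_upwards [hev, eventually_ge_atTop (0:ℝ)] with t htev ht0
    by_contra hcon
    push_neg at hcon
    have hmax : max t 0 = t := max_eq_left ht0
    rw [hGdef] at htev
    simp only [hmax] at htev
    have hstep : ∀ s ∈ Icc t (t + r), ε / 2 ≤ lam - (∑ j, μ j * u s j) := by
      intro s hs
      have hs0 : 0 ≤ s := le_trans ht0 hs.1
      have hl := hLip t ht0 s hs0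
      have habs : |s - t| ≤ r := by
        rw [abs_of_nonneg (by linarith [hs.1])]
        linarith [hs.2]
      have hMr : M * |s - t| ≤ M * r := mul_le_mul_of_nonneg_left habs hMpos.le
      have := (abs_le.mp hl).2
      linarith
    have haux : MonotoneOn (fun s => (∑ j, u s j) - ε / 2 * s) (Icc t (t + r)) := by
      refine monotoneOn_of_hasDerivWithinAt_nonneg (convex_Icc _ _)
        (f' := fun x => (∑ j, fluidF lam β μ j (u x)) - ε / 2) ?hc2 ?hd2 ?hnn2
      case hc2 =>
        exact ((continuousOn_finset_sum _ fun j _ => hcj j).mono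
          (fun s hs => le_trans ht0 hs.1)).sub
          (continuous_const.mul continuous_id).continuousOn
      case hd2 =>
        rw [interior_Icc]
        intro x hx
        have hxpos : 0 < x := lt_of_le_of_lt ht0 hx.1
        have hd1 : HasDerivAt (fun s => (∑ j, u s j) - ε / 2 * s)
            ((∑ j, fluidF lam β μ j (u x)) - ε / 2) x := by
          have hds : HasDerivAt (fun s => ∑ j, u s j)
              (∑ j, fluidF lam β μ j (u x)) x :=
            HasDerivAt.fun_sum fun j _ => hdj' x hxpos j
          have := hds.fun_sub ((hasDerivAt_id x).const_mul (ε / 2))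
          simpa using this
        exact hd1.hasDerivWithinAt
      case hnn2 =>
        rw [interior_Icc]
        intro x hx
        have hx0 : 0 ≤ x := le_trans ht0 hx.1.le
        beta_reduce
        rw [hsumF x hx0, sub_nonneg]
        linarith [hstep x (Ioo_subset_Icc_self hx)]
    have hfinal := haux (left_mem_Icc.mpr (by linarith)) (right_mem_Icc.mpr (by linarith))
      (by linarith)
    simp only at hfinal
    have hub2 : (∑ j, u (t + r) j) ≤ L := by
      have := hGleL (t + r)
      rw [hGdef] at this
      simp only [max_eq_left (by linarith : (0:ℝ) ≤ t + r)] at this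
      exact this
    nlinarith [hfinal, htev, hub2]
  have hhtend : Tendsto (fun t => lam - ∑ j, μ j * u t j) atTop (nhds 0) := by
    refine tendsto_order.2 ⟨fun a ha => ?_, fun a ha => hkey a ha⟩
    filter_upwards [eventually_ge_atTop (0:ℝ)] with t ht
    have h1 : ∑ j, μ j * u t j ≤ ∑ j, μ j * ν j :=
      Finset.sum_le_sum fun j _ => mul_le_mul_of_nonneg_left (hbox t ht j).2 (hμ j).le
    linarith [hμν]
  -- ################ conclusion ################
  intro j
  have hsq0 : Tendsto (fun t => μ j * (ν j - u t j)) atTop (nhds 0) := by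
    apply squeeze_zero' (g := fun t => lam - ∑ l, μ l * u t l)
    · filter_upwards [eventually_ge_atTop (0:ℝ)] with t ht
      exact mul_nonneg (hμ j).le (by linarith [(hbox t ht j).2])
    · filter_upwards [eventually_ge_atTop (0:ℝ)] with t ht
      have hterm : μ j * (ν j - u t j) ≤ ∑ l, μ l * (ν l - u t l) :=
        Finset.single_le_sum (f := fun l => μ l * (ν l - u t l))
          (fun l _ => mul_nonneg (hμ l).le (by linarith [(hbox t ht l).2]))
          (Finset.mem_univ j)
      have hsum2 : ∑ l, μ l * (ν l - u t l) = lam - ∑ l, μ l * u t l := by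
        simp_rw [mul_sub]
        rw [Finset.sum_sub_distrib, hμν]
      linarith
    · exact hhtend
  have hsq : Tendsto (fun t => ν j - u t j) atTop (nhds 0) := by
    have h1 := hsq0.const_mul (μ j)⁻¹
    rw [mul_zero] at h1
    have h2 : (fun t => (μ j)⁻¹ * (μ j * (ν j - u t j))) = fun t => ν j - u t j := by
      funext t
      rw [inv_mul_cancel_left₀ (hμ j).ne']
    rwa [h2] at h1
  have hfin := hsq.const_sub (ν j)
  simpa using hfin
end

section
/- (a) For every u : Fin J → ℝ with S(u) > 0 one has ∑_j F j (u) = λ − ∑_j μ j * u j. (b) If moreover 0 ≤ u j ≤ ν j for all j and u ≠ ν, then ∑_j F j (u) > 0. (Strict positive drift of the total occupied-server mass below the equilibrium point.) -/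
open scoped BigOperators
open Set Filter

/-- (a) `∑ j, F j (u) = λ − ∑ j, μ j u j` whenever `S(u) > 0`;
(b) if moreover `0 ≤ u j ≤ ν j` for all `j` and `u ≠ ν`, then `∑ j, F j (u) > 0`
(strict positive drift of total occupied-server mass below the equilibrium). -/
theorem pull_positive_total_drift_below_equilibrium
    (J : ℕ) (hJ : 1 ≤ J) (β μ : Fin J → ℝ)
    (hβ : ∀ j, 0 < β j) (hμ : ∀ j, 0 < μ j)
    (lam : ℝ) (hlam : 0 < lam) (hload : lam < ∑ j, β j * μ j)
    (ν : Fin J → ℝ)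
    (hν1 : ∀ j, 0 < ν j ∧ ν j < β j)
    (hν2 : ∑ j, ν j * μ j = lam)
    (hν3 : ∀ j l, ν j * μ j / (β j - ν j) = ν l * μ l / (β l - ν l)) :
    (∀ u : Fin J → ℝ, 0 < fluidS β u →
      ∑ j, fluidF lam β μ j u = lam - ∑ j, μ j * u j) ∧
    (∀ u : Fin J → ℝ, 0 < fluidS β u →
      (∀ j, 0 ≤ u j ∧ u j ≤ ν j) → u ≠ ν →
      0 < ∑ j, fluidF lam β μ j u) := by
  have ha : ∀ u : Fin J → ℝ, 0 < fluidS β u →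
      ∑ j, fluidF lam β μ j u = lam - ∑ j, μ j * u j := by
    intro u hS
    simp only [fluidF]
    rw [Finset.sum_sub_distrib]
    congr 1
    rw [← Finset.sum_div]
    rw [← Finset.mul_sum]
    rw [show (∑ j, (β j - u j)) = fluidS β u from rfl]
    field_simp
  refine ⟨ha, fun u hS hub hne => ?_⟩
  rw [ha u hS]
  have hlt : ∑ j, μ j * u j < lam := by
    rw [← hν2]
    have : ∃ j, u j ≠ ν j := by
      by_contra h
      push_neg at h
      exact hne (funext h)
    obtain ⟨j0, hj0⟩ := this
    apply Finset.sum_lt_sum (fun j _ => by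
      have := (hub j).2
      nlinarith [(hμ j).le])
    refine ⟨j0, Finset.mem_univ _, ?_⟩
    have h1 : u j0 < ν j0 := lt_of_le_of_ne (hub j0).2 hj0
    nlinarith [hμ j0]
  linarith
end

section
/- Let u be a fluid solution on [0, ∞) satisfying 0 ≤ u(t) j ≤ ν j for all t ≥ 0 and all j. If u(t₀) j = ν j for some coordinate j and some time t₀ > 0, then u(t) = ν for all t ≥ t₀. (If the fluid path below the equilibrium point reaches the equilibrium level in one coordinate, it must be at the equilibrium point and stay there.) -/
open scoped BigOperators
open Set Filter

/-- if a fluid solution on `[0, ∞)` staying below the equilibrium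
point reaches the equilibrium level in one coordinate at some time `t₀ > 0`,
then it equals `ν` for all `t ≥ t₀`. -/
theorem pull_fluid_absorbed_at_equilibrium
    (J : ℕ) (hJ : 1 ≤ J) (β μ : Fin J → ℝ)
    (hβ : ∀ j, 0 < β j) (hμ : ∀ j, 0 < μ j)
    (lam : ℝ) (hlam : 0 < lam) (hload : lam < ∑ j, β j * μ j)
    (ν : Fin J → ℝ)
    (hν1 : ∀ j, 0 < ν j ∧ ν j < β j)
    (hν2 : ∑ j, ν j * μ j = lam)
    (hν3 : ∀ j l, ν j * μ j / (β j - ν j) = ν l * μ l / (β l - ν l))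
    (u : ℝ → Fin J → ℝ)
    (hu : IsFluidSolution lam β μ (Ici 0) u)
    (hbound : ∀ t ∈ Ici (0:ℝ), ∀ j, 0 ≤ u t j ∧ u t j ≤ ν j)
    (t₀ : ℝ) (ht₀ : 0 < t₀) (j₀ : Fin J) (hhit : u t₀ j₀ = ν j₀) :
    ∀ t : ℝ, t₀ ≤ t → u t = ν := by
  obtain ⟨hucont, hode⟩ := hu
  have hS₀ : 0 < fluidS β ν := by
    apply Finset.sum_pos
    · intro l _; linarith [(hν1 l).2]
    · exact Finset.univ_nonempty_iff.2 (Fin.pos_iff_nonempty.1 hJ)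
  -- equilibrium identity: μ j ν j = lam (β j - ν j) / S(ν)
  have hkey : ∀ j, μ j * ν j = lam * (β j - ν j) / fluidS β ν := by
    intro j
    have hbν : ∀ l, (0:ℝ) < β l - ν l := fun l => by linarith [(hν1 l).2]
    have hsum : ∑ l, ν l * μ l = (ν j * μ j / (β j - ν j)) * fluidS β ν := by
      rw [fluidS, Finset.mul_sum]
      refine Finset.sum_congr rfl fun l _ => ?_
      rw [hν3 j l, div_mul_cancel₀ _ (ne_of_gt (hbν l))]
    rw [hν2] at hsum
    have : ν j * μ j / (β j - ν j) = lam / fluidS β ν := by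
      field_simp at hsum ⊢; linarith
    have h2 := (div_eq_div_iff (ne_of_gt (hbν j)) (ne_of_gt hS₀)).1 this
    rw [mul_comm (μ j) (ν j)]
    rw [eq_div_iff (ne_of_gt hS₀)]
    linarith [h2]
  -- Step A : u t₀ = ν
  have hIci : Ici (0:ℝ) ∈ nhds t₀ := Ici_mem_nhds ht₀
  have hA : u t₀ = ν := by
    have hmem : t₀ ∈ Ici (0:ℝ) := le_of_lt ht₀
    have hSt : 0 < fluidS β (u t₀) := (hode t₀ hmem).1
    have hd : HasDerivAt (fun s => u s j₀) (fluidF lam β μ j₀ (u t₀)) t₀ :=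
      ((hode t₀ hmem).2 j₀).hasDerivAt hIci
    have hmax : IsLocalMax (fun s => u s j₀) t₀ := by
      filter_upwards [hIci] with s hs
      simp only [hhit]
      exact (hbound s hs j₀).2
    have hF0 : fluidF lam β μ j₀ (u t₀) = 0 := hmax.hasDerivAt_eq_zero hd
    rw [fluidF, hhit, sub_eq_zero] at hF0
    rw [hkey j₀] at hF0
    have hbν : (0:ℝ) < β j₀ - ν j₀ := by linarith [(hν1 j₀).2]
    have hSeq : fluidS β (u t₀) = fluidS β ν := by
      have hnum : lam * (β j₀ - ν j₀) ≠ 0 := by positivity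
      have h := (div_eq_div_iff (ne_of_gt hSt) (ne_of_gt hS₀)).1 hF0
      exact (mul_left_cancel₀ hnum h).symm
    have hzero : ∑ l, (ν l - u t₀ l) = 0 := by
      have : ∑ l, (β l - u t₀ l) = ∑ l, (β l - ν l) := hSeq
      have h2 : ∑ l, ((β l - u t₀ l) - (β l - ν l)) = 0 := by
        rw [Finset.sum_sub_distrib, this, sub_self]
      rw [← h2]; exact Finset.sum_congr rfl fun l _ => by ring
    funext l
    have := (Finset.sum_eq_zero_iff_of_nonneg
      (fun l _ => by linarith [(hbound t₀ hmem l).2])).1 hzero l (Finset.mem_univ l)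
    linarith [this]
  -- Step B : the Lyapunov function ψ(t) = ∑ (ν l - u t l)
  set ψ : ℝ → ℝ := fun t => ∑ l, (ν l - u t l) with hψ
  have hψderiv : ∀ t ∈ Ici (0:ℝ),
      HasDerivWithinAt ψ (∑ l, (μ l * u t l) - lam) (Ici 0) t := by
    intro t ht
    have hSt : 0 < fluidS β (u t) := (hode t ht).1
    have hd : HasDerivWithinAt ψ (∑ l, -(fluidF lam β μ l (u t))) (Ici 0) t := by
      apply HasDerivWithinAt.fun_sum
      intro l _
      simpa using (((hode t ht).2 l).const_sub (ν l))
    convert hd using 1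
    simp only [fluidF]
    have hexp : ∑ l, -(lam * (β l - u t l) / fluidS β (u t) - μ l * u t l)
        = ∑ l, (μ l * u t l) - (∑ l, lam * (β l - u t l)) / fluidS β (u t) := by
      rw [Finset.sum_div, ← Finset.sum_sub_distrib]
      exact Finset.sum_congr rfl fun l _ => by ring
    rw [hexp, ← Finset.mul_sum]
    have hSdef : (∑ l, (β l - u t l)) = fluidS β (u t) := rfl
    rw [hSdef, mul_div_assoc, div_self (ne_of_gt hSt), mul_one]
  have hψnonneg : ∀ t ∈ Ici (0:ℝ), 0 ≤ ψ t := fun t ht =>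
    Finset.sum_nonneg fun l _ => by linarith [(hbound t ht l).2]
  have hsub : Ici t₀ ⊆ Ici (0:ℝ) := Ici_subset_Ici.2 (le_of_lt ht₀)
  have hanti : AntitoneOn ψ (Ici t₀) := by
    apply antitoneOn_of_deriv_nonpos (convex_Ici t₀)
    · intro t ht
      exact ((hψderiv t (hsub ht)).continuousWithinAt).mono hsub
    · intro t ht
      rw [interior_Ici] at ht
      have ht0 : (0:ℝ) < t := lt_trans ht₀ ht
      exact ((hψderiv t (le_of_lt ht0)).hasDerivAt (Ici_mem_nhds ht0)).differentiableAt.differentiableWithinAt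
    · intro t ht
      rw [interior_Ici] at ht
      have ht0 : (0:ℝ) < t := lt_trans ht₀ ht
      have hd := (hψderiv t (le_of_lt ht0)).hasDerivAt (Ici_mem_nhds ht0)
      rw [hd.deriv]
      have : ∑ l, μ l * u t l ≤ ∑ l, ν l * μ l :=
        Finset.sum_le_sum fun l _ => by
          have := (hbound t (le_of_lt ht0) l).2
          nlinarith [(hμ l).le]
      rw [hν2] at this
      linarith
  have hψt₀ : ψ t₀ = 0 := by
    simp only [hψ, hA, sub_self, Finset.sum_const_zero]
  intro t htt
  have hψt : ψ t = 0 :=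
    le_antisymm (by rw [← hψt₀]; exact hanti (self_mem_Ici) htt htt)
      (hψnonneg t (le_trans (le_of_lt ht₀) htt))
  funext l
  have := (Finset.sum_eq_zero_iff_of_nonneg
    (fun l _ => by linarith [(hbound t (le_trans (le_of_lt ht₀) htt) l).2])).1 hψt l
    (Finset.mem_univ l)
  linarith [this]
end

section
/- Let u and v be fluid solutions on [0, ∞) with 0 ≤ u(t) j ≤ β j and 0 ≤ v(t) j ≤ β j for all t ≥ 0 and all j, and suppose u(0) j ≤ v(0) j for all j. Then u(t) j ≤ v(t) j for all t ≥ 0 and all j. (Comparison/monotonicity of fluid trajectories: the fluid-limit analogue of the coupling monotonicity in Lemma 1, implying the FSP from the idle initial condition is a lower bound for any other such trajectory.) -/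
open scoped BigOperators
open Set Filter
open scoped Topology

lemma pull_key {J : ℕ} (lam : ℝ) (β μ : Fin J → ℝ) (hlam : 0 < lam) (hμ : ∀ l, 0 < μ l)
    (a b : Fin J → ℝ) (δ B : ℝ) (hδ : 0 < δ)
    (hSa : δ ≤ fluidS β a) (hSb : δ ≤ fluidS β b)
    (hB0 : 0 ≤ B) (hBb : ∀ l, β l - b l ≤ B) (hbβ : ∀ l, 0 ≤ β l - b l)
    (m : ℝ) (hm0 : 0 ≤ m) (hm : ∀ l, a l - b l ≤ m)
    (j : Fin J) (hj : a j - b j = m) :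
    fluidF lam β μ j a - fluidF lam β μ j b ≤ (lam * B * (J : ℝ) / (δ * δ)) * m := by
  have hSa0 : 0 < fluidS β a := hδ.trans_le hSa
  have hSb0 : 0 < fluidS β b := hδ.trans_le hSb
  have hsum : fluidS β b - fluidS β a = ∑ l, (a l - b l) := by
    simp only [fluidS, ← Finset.sum_sub_distrib]
    apply Finset.sum_congr rfl
    intros; ring
  have hsumle : fluidS β b - fluidS β a ≤ (J : ℝ) * m := by
    rw [hsum]
    calc ∑ l, (a l - b l) ≤ ∑ _l : Fin J, m := Finset.sum_le_sum fun l _ => hm l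
      _ = (J : ℝ) * m := by simp [Finset.sum_const, mul_comm]
  have haj : a j = b j + m := by linarith
  have hid : fluidF lam β μ j a - fluidF lam β μ j b
      = lam * (β j - b j) * ((fluidS β b - fluidS β a) / (fluidS β a * fluidS β b))
        - lam * m / fluidS β a - μ j * m := by
    simp only [fluidF, haj]
    field_simp
    ring
  have hJm : 0 ≤ (J : ℝ) * m := mul_nonneg (Nat.cast_nonneg J) hm0
  have hδδ : (0:ℝ) < δ * δ := mul_pos hδ hδ
  have hfrac : (fluidS β b - fluidS β a) / (fluidS β a * fluidS β b) ≤ ((J : ℝ) * m) / (δ * δ) := by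
    rcases le_or_gt (fluidS β b - fluidS β a) 0 with h | h
    · exact le_trans (div_nonpos_iff.2 (Or.inr ⟨h, (mul_pos hSa0 hSb0).le⟩)) (div_nonneg hJm hδδ.le)
    · calc (fluidS β b - fluidS β a) / (fluidS β a * fluidS β b)
          ≤ (fluidS β b - fluidS β a) / (δ * δ) := by
            gcongr
        _ ≤ ((J : ℝ) * m) / (δ * δ) := by gcongr
  have ht1 : lam * (β j - b j) * ((fluidS β b - fluidS β a) / (fluidS β a * fluidS β b))
      ≤ lam * B * (((J : ℝ) * m) / (δ * δ)) := by
    have h1 : 0 ≤ lam * (β j - b j) := mul_nonneg hlam.le (hbβ j)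
    calc lam * (β j - b j) * ((fluidS β b - fluidS β a) / (fluidS β a * fluidS β b))
        ≤ lam * (β j - b j) * (((J : ℝ) * m) / (δ * δ)) := mul_le_mul_of_nonneg_left hfrac h1
      _ ≤ lam * B * (((J : ℝ) * m) / (δ * δ)) := by
          apply mul_le_mul_of_nonneg_right _ (div_nonneg hJm hδδ.le)
          exact mul_le_mul_of_nonneg_left (hBb j) hlam.le
  have h2 : 0 ≤ lam * m / fluidS β a := div_nonneg (mul_nonneg hlam.le hm0) hSa0.le
  have h3 : 0 ≤ μ j * m := mul_nonneg (hμ j).le hm0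
  have heq : lam * B * (((J : ℝ) * m) / (δ * δ)) = (lam * B * (J : ℝ) / (δ * δ)) * m := by ring
  rw [hid]
  linarith

/-- comparison of fluid trajectories: if two fluid solutions on
`[0, ∞)` with values in `∏ j [0, β j]` are componentwise ordered at time `0`,
they remain so at all times (fluid analogue of the coupling monotonicity). -/
theorem pull_fluid_comparison
    (J : ℕ) (hJ : 1 ≤ J) (β μ : Fin J → ℝ)
    (hβ : ∀ j, 0 < β j) (hμ : ∀ j, 0 < μ j)
    (lam : ℝ) (hlam : 0 < lam) (hload : lam < ∑ j, β j * μ j)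
    (u v : ℝ → Fin J → ℝ)
    (hu : IsFluidSolution lam β μ (Ici 0) u)
    (hv : IsFluidSolution lam β μ (Ici 0) v)
    (hubound : ∀ t ∈ Ici (0:ℝ), ∀ j, 0 ≤ u t j ∧ u t j ≤ β j)
    (hvbound : ∀ t ∈ Ici (0:ℝ), ∀ j, 0 ≤ v t j ∧ v t j ≤ β j)
    (h0 : ∀ j, u 0 j ≤ v 0 j) :
    ∀ t ∈ Ici (0:ℝ), ∀ j, u t j ≤ v t j := by
  intro t ht j
  have hne : (Finset.univ : Finset (Fin J)).Nonempty := ⟨j, Finset.mem_univ j⟩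
  set g : ℝ → ℝ := fun x => Finset.univ.sup' hne (fun l => u x l - v x l) with hgdef
  set f : ℝ → ℝ := fun x => max (g x) 0 with hfdef
  -- basic continuity facts
  have hucont : ∀ l, ContinuousOn (fun x => u x l) (Ici (0:ℝ)) :=
    fun l => (continuous_apply l).comp_continuousOn hu.1
  have hvcont : ∀ l, ContinuousOn (fun x => v x l) (Ici (0:ℝ)) :=
    fun l => (continuous_apply l).comp_continuousOn hv.1
  have hdcont : ∀ l, ContinuousOn (fun x => u x l - v x l) (Ici (0:ℝ)) :=
    fun l => (hucont l).sub (hvcont l)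
  have hgcont : ContinuousOn g (Ici (0:ℝ)) :=
    ContinuousOn.finset_sup'_apply hne fun l _ => hdcont l
  have hfcont : ContinuousOn f (Ici (0:ℝ)) := hgcont.sup continuousOn_const
  have hSucont : ContinuousOn (fun x => fluidS β (u x)) (Ici (0:ℝ)) := by
    simp only [fluidS]
    exact continuousOn_finset_sum _ fun l _ => continuousOn_const.sub (hucont l)
  have hSvcont : ContinuousOn (fun x => fluidS β (v x)) (Ici (0:ℝ)) := by
    simp only [fluidS]
    exact continuousOn_finset_sum _ fun l _ => continuousOn_const.sub (hvcont l)
  -- a uniform lower bound δ for S on [0, t]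
  have hsub : Icc (0:ℝ) t ⊆ Ici 0 := Icc_subset_Ici_self
  have hφcont : ContinuousOn (fun x => min (fluidS β (u x)) (fluidS β (v x))) (Icc 0 t) :=
    (hSucont.mono hsub).inf (hSvcont.mono hsub)
  obtain ⟨x0, hx0, hmin'⟩ := isCompact_Icc.exists_isMinOn ⟨0, left_mem_Icc.2 ht⟩ hφcont
  have hmin : ∀ x ∈ Icc (0:ℝ) t, min (fluidS β (u x0)) (fluidS β (v x0)) ≤ min (fluidS β (u x)) (fluidS β (v x)) := fun x hx => hmin' hx
  set δ : ℝ := min (fluidS β (u x0)) (fluidS β (v x0)) with hδdef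
  have hδpos : 0 < δ := lt_min (hu.2 x0 (hsub hx0)).1 (hv.2 x0 (hsub hx0)).1
  have hδu : ∀ x ∈ Icc (0:ℝ) t, δ ≤ fluidS β (u x) :=
    fun x hx => le_trans (hmin x hx) (min_le_left _ _)
  have hδv : ∀ x ∈ Icc (0:ℝ) t, δ ≤ fluidS β (v x) :=
    fun x hx => le_trans (hmin x hx) (min_le_right _ _)
  -- bound B on β and Lipschitz-type constant K
  set B : ℝ := Finset.univ.sup' hne β with hBdef
  have hB : ∀ l, β l ≤ B := fun l => Finset.le_sup' β (Finset.mem_univ l)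
  have hB0 : 0 ≤ B := le_trans (hβ j).le (hB j)
  set K : ℝ := lam * B * (J : ℝ) / (δ * δ) with hKdef
  have hK0 : 0 ≤ K :=
    div_nonneg (mul_nonneg (mul_nonneg hlam.le hB0) (Nat.cast_nonneg J)) (mul_pos hδpos hδpos).le
  -- derivatives of the coordinate differences
  have hd : ∀ x ∈ Ici (0:ℝ), ∀ l, HasDerivWithinAt (fun s => u s l - v s l)
      (fluidF lam β μ l (u x) - fluidF lam β μ l (v x)) (Ici 0) x :=
    fun x hx l => ((hu.2 x hx).2 l).sub ((hv.2 x hx).2 l)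
  -- Grönwall
  have ha0 : f 0 ≤ 0 :=
    max_le (Finset.sup'_le _ _ fun l _ => sub_nonpos.2 (h0 l)) le_rfl
  have hbound : ∀ x ∈ Ico (0:ℝ) t, K * f x ≤ K * f x + 0 := fun x _ => by simp
  have hf' : ∀ x ∈ Ico (0:ℝ) t, ∀ r, K * f x < r →
      ∃ᶠ z in 𝓝[>] x, (z - x)⁻¹ * (f z - f x) < r := by
    intro x hx r hr
    have hx0 : (0:ℝ) ≤ x := hx.1
    have hxIcc : x ∈ Icc (0:ℝ) t := ⟨hx.1, hx.2.le⟩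
    have hf0 : 0 ≤ f x := le_max_right _ _
    have hrpos : 0 < r := lt_of_le_of_lt (mul_nonneg hK0 hf0) hr
    have hIoiIci : Ioi x ⊆ Ici (0:ℝ) := fun z hz => le_trans hx0 (le_of_lt hz)
    have hIoi_le : 𝓝[>] x ≤ 𝓝[Ici (0:ℝ)] x := nhdsWithin_mono x hIoiIci
    apply Filter.Eventually.frequently
    have key : ∀ l, ∀ᶠ z in 𝓝[>] x, max (u z l - v z l) 0 < f x + r * (z - x) := by
      intro l
      have hgl : u x l - v x l ≤ f x :=
        le_trans (Finset.le_sup' (fun l => u x l - v x l) (Finset.mem_univ l)) (le_max_left _ _)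
      have hposev : ∀ᶠ z in 𝓝[>] x, 0 < r * (z - x) := by
        filter_upwards [self_mem_nhdsWithin] with z hz
        exact mul_pos hrpos (sub_pos.2 hz)
      by_cases hcase : u x l - v x l = f x
      · -- l is a maximizer and f x = g x ≥ 0
        have hDle : fluidF lam β μ l (u x) - fluidF lam β μ l (v x) ≤ K * f x := by
          have := pull_key lam β μ hlam hμ (u x) (v x) δ B hδpos (hδu x hxIcc) (hδv x hxIcc)
            hB0 (fun m => le_trans (by linarith [(hvbound x hx0 m).1]) (hB m))
            (fun m => sub_nonneg.2 (hvbound x hx0 m).2)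
            (f x) hf0
            (fun m => le_trans (Finset.le_sup' (fun l => u x l - v x l) (Finset.mem_univ m))
              (le_max_left _ _))
            l hcase
          calc fluidF lam β μ l (u x) - fluidF lam β μ l (v x)
              ≤ (lam * B * (J : ℝ) / (δ * δ)) * f x := this
            _ = K * f x := by rw [hKdef]
        have hDr : fluidF lam β μ l (u x) - fluidF lam β μ l (v x) < r := lt_of_le_of_lt hDle hr
        have hder : HasDerivWithinAt (fun s => u s l - v s l)
            (fluidF lam β μ l (u x) - fluidF lam β μ l (v x)) (Ioi x) x :=
          (hd x hx0 l).mono hIoiIci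
        rw [hasDerivWithinAt_iff_tendsto_slope] at hder
        have hdiff : (Ioi x) \ {x} = Ioi x := diff_singleton_eq_self (fun h => lt_irrefl x h)
        rw [hdiff] at hder
        have hev := hder.eventually_lt_const hDr
        filter_upwards [hev, self_mem_nhdsWithin, hposev] with z hslope hz hpos
        have hzx : 0 < z - x := sub_pos.2 hz
        have hslope' : (u z l - v z l) - (u x l - v x l) < r * (z - x) := by
          have := (div_lt_iff₀ hzx).1 (by simpa [slope_def_field, div_eq_inv_mul] using hslope)
          linarith [this]
        rw [max_lt_iff]
        constructor
        · linarith [hcase ▸ hslope']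
        · linarith
      · have hlt : u x l - v x l < f x := lt_of_le_of_ne hgl hcase
        have hcw : Tendsto (fun z => u z l - v z l) (𝓝[>] x) (𝓝 (u x l - v x l)) :=
          ((hdcont l) x hx0).mono_left hIoi_le
        filter_upwards [hcw.eventually_lt_const hlt, hposev] with z hz hpos
        rw [max_lt_iff]
        constructor <;> linarith
    have hall : ∀ᶠ z in 𝓝[>] x, ∀ l, max (u z l - v z l) 0 < f x + r * (z - x) :=
      eventually_all.2 key
    filter_upwards [hall, self_mem_nhdsWithin] with z hz hzx
    have hzxpos : 0 < z - x := sub_pos.2 hzx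
    have hfz : f z < f x + r * (z - x) := by
      rw [hfdef]
      refine max_lt ?_ ?_
      · exact Finset.sup'_lt_iff hne |>.2 fun l _ =>
          lt_of_le_of_lt (le_max_left _ _) (hz l)
      · have := hz j
        calc (0:ℝ) ≤ max (u z j - v z j) 0 := le_max_right _ _
          _ < f x + r * (z - x) := hz j
    rw [inv_mul_lt_iff₀ hzxpos]
    linarith
  have main := le_gronwallBound_of_liminf_deriv_right_le (f := f) (f' := fun x => K * f x)
    (δ := 0) (K := K) (ε := 0) (a := 0) (b := t)
    (hfcont.mono hsub) hf' ha0 hbound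
  have hft : f t ≤ 0 := by
    have := main t (right_mem_Icc.2 ht)
    rwa [gronwallBound_ε0_δ0] at this
  have : u t j - v t j ≤ f t :=
    le_trans (Finset.le_sup' (fun l => u t l - v t l) (Finset.mem_univ j)) (le_max_left _ _)
  linarith
end

section
/- For every ε > 0 and every index l, there exist τ > 0 and δ > 0, depending only on J, λ, β, μ, ε, such that the following holds. Suppose v, w : [0, ∞) → (Fin J → ℝ) are continuous functions with 0 ≤ w(t) j ≤ v(t) j ≤ β j for all t ≥ 0 and all j, with v(0) j = ν j for all j and w(0) l ≥ ε, and such that at every t ≥ 0 with ∑_m (β m − v(t) m) > 0, each coordinate map is differentiable at t with derivatives satisfying v'(t) j = λ * (β j − v(t) j) / ∑_m (β m − v(t) m) − μ j * (v(t) j − w(t) j) and w'(t) j ≥ −μ j * w(t) j for all j. Then v(τ) l ≥ ν l + δ. (Fluid-path form of Lemma 4(vi): a positive mass of queues of length at least 2 in pool l pushes the occupied fraction of pool l strictly above its equilibrium level.) -/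
open scoped BigOperators
open Set Filter

set_option maxHeartbeats 4000000 in
/-- fluid-path form of Lemma 4(vi): for every `ε > 0` there are
`τ > 0` and `δ > 0`, depending only on `J, λ, β, μ, ε`, such that for every
pool `l` and every pair of continuous paths `v, w` (fractions of queues of
length ≥ 1 resp. ≥ 2) with `0 ≤ w ≤ v ≤ β`, `v(0) = ν`, `w(0) l ≥ ε`, and
drift dynamics `v' j = λ (β j − v j)/∑ m (β m − v m) − μ j (v j − w j)`,
`w' j ≥ −μ j w j` (whenever `∑ m (β m − v m) > 0`), one has `v(τ) l ≥ ν l + δ`. -/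
theorem pull_second_level_mass_pushes_up
    (J : ℕ) (hJ : 1 ≤ J) (β μ : Fin J → ℝ)
    (hβ : ∀ j, 0 < β j) (hμ : ∀ j, 0 < μ j)
    (lam : ℝ) (hlam : 0 < lam) (hload : lam < ∑ j, β j * μ j)
    (ν : Fin J → ℝ)
    (hν1 : ∀ j, 0 < ν j ∧ ν j < β j)
    (hν2 : ∑ j, ν j * μ j = lam)
    (hν3 : ∀ j l, ν j * μ j / (β j - ν j) = ν l * μ l / (β l - ν l)) :
    ∀ ε > (0:ℝ), ∃ τ > (0:ℝ), ∃ δ > (0:ℝ), ∀ l : Fin J,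
      ∀ v w : ℝ → Fin J → ℝ,
        ContinuousOn v (Ici 0) → ContinuousOn w (Ici 0) →
        (∀ t ∈ Ici (0:ℝ), ∀ j, 0 ≤ w t j ∧ w t j ≤ v t j ∧ v t j ≤ β j) →
        (∀ j, v 0 j = ν j) → ε ≤ w 0 l →
        (∀ t ∈ Ici (0:ℝ), 0 < ∑ m, (β m - v t m) → ∀ j,
          HasDerivWithinAt (fun s => v s j)
            (lam * (β j - v t j) / (∑ m, (β m - v t m)) - μ j * (v t j - w t j))
            (Ici 0) t ∧
          ∃ d : ℝ, HasDerivWithinAt (fun s => w s j) d (Ici 0) t ∧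
            -(μ j * w t j) ≤ d) →
        ν l + δ ≤ v τ l := by
  intro ε hε
  have hNE : Nonempty (Fin J) := ⟨⟨0, hJ⟩⟩
  have hJ1pos : (0:ℝ) < (J:ℝ) + 1 := by positivity
  obtain ⟨S0, hS0def⟩ : ∃ S0 : ℝ, S0 = ∑ m, (β m - ν m) := ⟨_, rfl⟩
  have hS0 : 0 < S0 := hS0def ▸
    Finset.sum_pos (fun j _ => sub_pos.2 (hν1 j).2) Finset.univ_nonempty
  obtain ⟨B, hBdef⟩ : ∃ B : ℝ, B = ∑ j, μ j * β j := ⟨_, rfl⟩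
  have hB : 0 < B := hBdef ▸
    Finset.sum_pos (fun j _ => mul_pos (hμ j) (hβ j)) Finset.univ_nonempty
  obtain ⟨M, hMdef⟩ : ∃ M : ℝ, M = lam + B := ⟨_, rfl⟩
  have hM : 0 < M := hMdef ▸ add_pos hlam hB
  obtain ⟨mmu, hmmudef⟩ : ∃ m : ℝ, m = Finset.univ.inf' Finset.univ_nonempty μ := ⟨_, rfl⟩
  have hmmu : 0 < mmu := hmmudef ▸ (Finset.lt_inf'_iff _).2 fun j _ => hμ j
  have hmmu_le : ∀ j, mmu ≤ μ j := fun j => hmmudef ▸ Finset.inf'_le _ (Finset.mem_univ j)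
  obtain ⟨Mmu, hMmudef⟩ : ∃ Mm : ℝ, Mm = ∑ j, μ j := ⟨_, rfl⟩
  have hMmu_le : ∀ j, μ j ≤ Mmu := fun j => hMmudef ▸
    Finset.single_le_sum (fun i _ => (hμ i).le) (Finset.mem_univ j)
  have hMmu : 0 < Mmu := lt_of_lt_of_le (hμ ⟨0, hJ⟩) (hMmu_le _)
  obtain ⟨K1, hK1def⟩ : ∃ K1 : ℝ, K1 = 2 * lam * M * ((J:ℝ) + 1) / S0 := ⟨_, rfl⟩
  have hK1 : 0 < K1 := hK1def ▸
    div_pos (mul_pos (mul_pos (mul_pos two_pos hlam) hM) hJ1pos) hS0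
  obtain ⟨K, hKdef⟩ : ∃ K : ℝ, K = K1 + Mmu * (M + B) := ⟨_, rfl⟩
  have hK : 0 < K := hKdef ▸ add_pos hK1 (mul_pos hMmu (add_pos hM hB))
  obtain ⟨τ, hτdef⟩ : ∃ τ : ℝ,
      τ = min (S0 / (4 * ((J:ℝ) + 1) * M)) (mmu * ε / (2 * K)) := ⟨_, rfl⟩
  have hτ : 0 < τ := hτdef ▸ lt_min
    (div_pos hS0 (mul_pos (mul_pos (by norm_num : (0:ℝ) < 4) hJ1pos) hM))
    (div_pos (mul_pos hmmu hε) (mul_pos two_pos hK))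
  have hτ1 : (J:ℝ) * M * τ ≤ S0 / 4 := by
    have h1 : τ ≤ S0 / (4 * ((J:ℝ) + 1) * M) := hτdef ▸ min_le_left _ _
    have hden : (0:ℝ) < 4 * ((J:ℝ) + 1) * M :=
      mul_pos (mul_pos (by norm_num : (0:ℝ) < 4) hJ1pos) hM
    rw [le_div_iff₀ hden] at h1
    nlinarith [mul_nonneg hM.le hτ.le]
  have hτ2 : K * τ ≤ mmu * ε / 2 := by
    have h1 : τ ≤ mmu * ε / (2 * K) := hτdef ▸ min_le_right _ _
    rw [le_div_iff₀ (mul_pos two_pos hK)] at h1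
    linarith
  refine ⟨τ, hτ, mmu * ε / 2 * τ,
    mul_pos (div_pos (mul_pos hmmu hε) two_pos) hτ, ?_⟩
  intro l v w hvc hwc hvw hv0 hw0 hder
  -- derivative bound
  have hbound : ∀ t ∈ Ici (0:ℝ), 0 < (∑ m, (β m - v t m)) → ∀ j,
      |lam * (β j - v t j) / (∑ m, (β m - v t m)) - μ j * (v t j - w t j)| ≤ M := by
    intro t ht hS j
    obtain ⟨hw0', hwv, hvβ⟩ := hvw t ht j
    have h1 : 0 ≤ β j - v t j := sub_nonneg.2 hvβ
    have h2 : β j - v t j ≤ ∑ m, (β m - v t m) :=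
      Finset.single_le_sum (f := fun m => β m - v t m)
        (fun m _ => sub_nonneg.2 (hvw t ht m).2.2) (Finset.mem_univ j)
    have h3 : 0 ≤ lam * (β j - v t j) / (∑ m, (β m - v t m)) := by positivity
    have h4 : lam * (β j - v t j) / (∑ m, (β m - v t m)) ≤ lam := by
      rw [div_le_iff₀ hS]
      nlinarith [mul_nonneg hlam.le (sub_nonneg.2 h2)]
    have h5 : 0 ≤ μ j * (v t j - w t j) := mul_nonneg (hμ j).le (by linarith)
    have h6 : μ j * (v t j - w t j) ≤ B := by
      have h7 : μ j * (v t j - w t j) ≤ μ j * β j :=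
        mul_le_mul_of_nonneg_left (by linarith) (hμ j).le
      have h8 : μ j * β j ≤ B := hBdef ▸
        Finset.single_le_sum (f := fun i => μ i * β i)
          (fun i _ => (mul_pos (hμ i) (hβ i)).le) (Finset.mem_univ j)
      linarith
    rw [abs_le]
    constructor <;> [linarith; linarith]
  -- MVT helper
  have mvt : ∀ A : Set ℝ, Convex ℝ A → A ⊆ Ici 0 →
      (∀ x ∈ A, 0 < (∑ m, (β m - v x m))) → (0:ℝ) ∈ A →
      ∀ t ∈ A, ∀ j, |v t j - ν j| ≤ M * t := by
    intro A hA hAsub hApos hA0 t ht j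
    have hd : ∀ x ∈ A, HasDerivWithinAt (fun s => v s j)
        ((fun s => lam * (β j - v s j) / (∑ m, (β m - v s m)) - μ j * (v s j - w s j)) x) A x :=
      fun x hx => ((hder x (hAsub hx) (hApos x hx) j).1).mono hAsub
    have hb : ∀ x ∈ A,
        ‖(fun s => lam * (β j - v s j) / (∑ m, (β m - v s m)) - μ j * (v s j - w s j)) x‖ ≤ M :=
      fun x hx => by
        simpa [Real.norm_eq_abs] using hbound x (hAsub hx) (hApos x hx) j
    have hmv := Convex.norm_image_sub_le_of_norm_hasDerivWithin_le hd hb hA hA0 ht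
    have htnn : (0:ℝ) ≤ t := hAsub ht
    simpa [Real.norm_eq_abs, hv0 j, abs_of_nonneg htnn] using hmv
  have hS0eq : (∑ m, (β m - v 0 m)) = S0 := by
    rw [hS0def]; exact Finset.sum_congr rfl fun m _ => by rw [hv0 m]
  have hScont : ContinuousOn (fun t => ∑ m, (β m - v t m)) (Ici (0:ℝ)) := by
    apply continuousOn_finset_sum
    intro m _
    exact continuousOn_const.sub ((continuous_apply m).comp_continuousOn hvc)
  -- S stays above S0/2 on [0, τ]
  have hSpos : ∀ t ∈ Icc (0:ℝ) τ, S0 / 2 < ∑ m, (β m - v t m) := by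
    by_contra hcon
    push_neg at hcon
    obtain ⟨t0, ht0, hle⟩ := hcon
    set E : Set ℝ := Icc (0:ℝ) τ ∩ (fun t => ∑ m, (β m - v t m)) ⁻¹' Iic (S0/2) with hEdef
    have hEne : E.Nonempty := ⟨t0, ht0, hle⟩
    have hEclosed : IsClosed E :=
      (hScont.mono Icc_subset_Ici_self).preimage_isClosed_of_isClosed isClosed_Icc isClosed_Iic
    have hEbdd : BddBelow E := ⟨0, fun x hx => hx.1.1⟩
    have ht1E : sInf E ∈ E := hEclosed.csInf_mem hEne hEbdd
    set t1 := sInf E with ht1def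
    have ht1le : (∑ m, (β m - v t1 m)) ≤ S0/2 := ht1E.2
    have ht1pos : 0 < t1 := by
      rcases eq_or_lt_of_le ht1E.1.1 with h | h
      · exfalso
        rw [← h] at ht1le
        rw [hS0eq] at ht1le
        linarith
      · exact h
    have hIcoPos : ∀ x ∈ Ico (0:ℝ) t1, 0 < ∑ m, (β m - v x m) := by
      intro x hx
      by_contra hcx
      push_neg at hcx
      have hxE : x ∈ E := ⟨⟨hx.1, hx.2.le.trans ht1E.1.2⟩, by
        simp only [mem_preimage, mem_Iic]; linarith⟩
      exact absurd (csInf_le hEbdd hxE) (not_le.2 hx.2)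
    have hb1 : ∀ t ∈ Ico (0:ℝ) t1, ∀ j, |v t j - ν j| ≤ M * t :=
      mvt (Ico 0 t1) (convex_Ico _ _) (fun x hx => hx.1) hIcoPos ⟨le_refl _, ht1pos⟩
    have hb2 : ∀ j, |v t1 j - ν j| ≤ M * t1 := by
      intro j
      have hcont : ContinuousOn (fun t => |v t j - ν j| - M * t) (Icc 0 t1) := by
        apply ContinuousOn.sub
        · exact (((continuous_apply j).comp_continuousOn
            (hvc.mono (fun x hx => le_trans (le_refl _) hx.1))).sub continuousOn_const).abs
        · exact (continuous_const.mul continuous_id).continuousOn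
      have hF : IsClosed (Icc (0:ℝ) t1 ∩ (fun t => |v t j - ν j| - M * t) ⁻¹' Iic 0) :=
        hcont.preimage_isClosed_of_isClosed isClosed_Icc isClosed_Iic
      have hsub : Ico (0:ℝ) t1 ⊆ Icc (0:ℝ) t1 ∩ (fun t => |v t j - ν j| - M * t) ⁻¹' Iic 0 := by
        intro x hx
        refine ⟨⟨hx.1, hx.2.le⟩, ?_⟩
        simp only [mem_preimage, mem_Iic]
        have := hb1 x hx j
        linarith
      have hcl : Icc (0:ℝ) t1 ⊆ Icc (0:ℝ) t1 ∩ (fun t => |v t j - ν j| - M * t) ⁻¹' Iic 0 := by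
        have h := hF.closure_subset_iff.2 hsub
        rwa [closure_Ico (ne_of_lt ht1pos)] at h
      have := (hcl ⟨ht1pos.le, le_refl _⟩).2
      simp only [mem_preimage, mem_Iic] at this
      linarith
    have hsum : S0 - (∑ m, (β m - v t1 m)) ≤ (J:ℝ) * (M * t1) := by
      have he : S0 - (∑ m, (β m - v t1 m)) = ∑ m, (v t1 m - ν m) := by
        rw [hS0def, ← Finset.sum_sub_distrib]
        exact Finset.sum_congr rfl fun m _ => by ring
      rw [he]
      calc ∑ m, (v t1 m - ν m) ≤ ∑ _m : Fin J, M * t1 :=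
            Finset.sum_le_sum fun m _ => le_trans (le_abs_self _) (hb2 m)
        _ = (J:ℝ) * (M * t1) := by
            simp [Finset.sum_const, Finset.card_univ, nsmul_eq_mul]
    have hτle : t1 ≤ τ := ht1E.1.2
    have hJM : 0 ≤ (J:ℝ) * M := mul_nonneg (Nat.cast_nonneg J) hM.le
    nlinarith [hτ1]
  have hpos' : ∀ t ∈ Icc (0:ℝ) τ, 0 < ∑ m, (β m - v t m) :=
    fun t ht => lt_trans (half_pos hS0) (hSpos t ht)
  have hvb : ∀ t ∈ Icc (0:ℝ) τ, ∀ j, |v t j - ν j| ≤ M * t :=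
    mvt (Icc 0 τ) (convex_Icc _ _) (fun x hx => hx.1) hpos' ⟨le_refl _, hτ.le⟩
  have hSup : ∀ t ∈ Icc (0:ℝ) τ, (∑ m, (β m - v t m)) ≤ S0 + (J:ℝ) * M * t := by
    intro t ht
    have he : (∑ m, (β m - v t m)) - S0 = ∑ m, (ν m - v t m) := by
      rw [hS0def, ← Finset.sum_sub_distrib]
      exact Finset.sum_congr rfl fun m _ => by ring
    have hb : ∑ m, (ν m - v t m) ≤ (J:ℝ) * M * t := by
      have h1 : ∑ m, (ν m - v t m) ≤ ∑ _m : Fin J, M * t :=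
        Finset.sum_le_sum fun m _ => by
          have := hvb t ht m
          rw [abs_le] at this
          linarith [this.1]
      have h2 : (∑ _m : Fin J, M * t) = (J:ℝ) * (M * t) := by
        simp [Finset.sum_const, Finset.card_univ, nsmul_eq_mul]
      rw [h2] at h1
      linarith
    linarith [he, hb]
  -- lower bound on w
  have hwlow : ∀ t ∈ Icc (0:ℝ) τ, ε - B * t ≤ w t l := by
    have hmono : MonotoneOn (fun s => w s l + B * s) (Icc (0:ℝ) τ) := by
      apply monotoneOn_of_deriv_nonneg (convex_Icc _ _)
      · exact ((continuous_apply l).comp_continuousOn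
          (hwc.mono Icc_subset_Ici_self)).add (continuous_const.mul continuous_id).continuousOn
      · intro x hx
        rw [interior_Icc] at hx
        obtain ⟨d, hd, hdge⟩ := (hder x hx.1.le (hpos' x ⟨hx.1.le, hx.2.le⟩) l).2
        have hdx : HasDerivAt (fun s => w s l) d x := hd.hasDerivAt (Ici_mem_nhds hx.1)
        exact ((hdx.add ((hasDerivAt_id x).const_mul B)).differentiableAt).differentiableWithinAt
      · intro x hx
        rw [interior_Icc] at hx
        obtain ⟨d, hd, hdge⟩ := (hder x hx.1.le (hpos' x ⟨hx.1.le, hx.2.le⟩) l).2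
        have hdx : HasDerivAt (fun s => w s l + B * s) (d + B * 1) x :=
          (hd.hasDerivAt (Ici_mem_nhds hx.1)).add ((hasDerivAt_id x).const_mul B)
        rw [hdx.deriv]
        have hwb : w x l ≤ β l := le_trans (hvw x hx.1.le l).2.1 (hvw x hx.1.le l).2.2
        have hwnn : 0 ≤ w x l := (hvw x hx.1.le l).1
        have hμwB : μ l * w x l ≤ B := by
          have h7 : μ l * w x l ≤ μ l * β l :=
            mul_le_mul_of_nonneg_left hwb (hμ l).le
          have h8 : μ l * β l ≤ B := hBdef ▸
            Finset.single_le_sum (f := fun i => μ i * β i)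
              (fun i _ => (mul_pos (hμ i) (hβ i)).le) (Finset.mem_univ l)
          linarith
        linarith
    intro t ht
    have h0m : (0:ℝ) ∈ Icc (0:ℝ) τ := ⟨le_refl _, hτ.le⟩
    have := hmono h0m ht ht.1
    simp only [mul_zero, add_zero] at this
    linarith
  -- equilibrium identity
  have hl0 : (0:ℝ) < β l - ν l := sub_pos.2 (hν1 l).2
  have heq : μ l * ν l = lam * (β l - ν l) / S0 := by
    have hc : ∀ j, ν j * μ j = (ν l * μ l / (β l - ν l)) * (β j - ν j) := by
      intro j
      have hj : β j - ν j ≠ 0 := ne_of_gt (sub_pos.2 (hν1 j).2)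
      rw [← hν3 j l, div_mul_cancel₀ _ hj]
    have hsum : lam = ν l * μ l / (β l - ν l) * S0 := by
      rw [← hν2, hS0def, Finset.mul_sum]
      exact Finset.sum_congr rfl fun j _ => hc j
    rw [hsum]
    field_simp
  -- lower bound on the drift of v at l
  have hv'low : ∀ x ∈ Ioo (0:ℝ) τ, mmu * ε / 2 ≤
      lam * (β l - v x l) / (∑ m, (β m - v x m)) - μ l * (v x l - w x l) := by
    intro x hx
    have hxc : x ∈ Icc (0:ℝ) τ := ⟨hx.1.le, hx.2.le⟩
    have hs2 : S0 / 2 < ∑ m, (β m - v x m) := hSpos x hxc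
    have hspos : 0 < ∑ m, (β m - v x m) := lt_trans (half_pos hS0) hs2
    have hsu : (∑ m, (β m - v x m)) ≤ S0 + (J:ℝ) * M * x := hSup x hxc
    have hva := hvb x hxc l
    rw [abs_le] at hva
    have hwl := hwlow x hxc
    have hx0 : (0:ℝ) ≤ x := hx.1.le
    have hxτ : x ≤ τ := hx.2.le
    have hbl : β l - ν l ≤ S0 := hS0def ▸
      Finset.single_le_sum (f := fun m => β m - ν m)
        (fun m _ => (sub_pos.2 (hν1 m).2).le) (Finset.mem_univ l)
    have hblnn : (0:ℝ) ≤ β l - ν l := hl0.le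
    have hJMx : (0:ℝ) ≤ (J:ℝ) * M * x :=
      mul_nonneg (mul_nonneg (Nat.cast_nonneg J) hM.le) hx0
    -- fraction estimate
    have hfrac : lam * (β l - ν l) / S0 - K1 * x ≤
        lam * (β l - v x l) / (∑ m, (β m - v x m)) := by
      obtain ⟨s, hsdef⟩ : ∃ s : ℝ, s = ∑ m, (β m - v x m) := ⟨_, rfl⟩
      rw [← hsdef]
      rw [← hsdef] at hsu hs2 hspos
      have h1 : lam * (β l - ν l) * (s - S0) ≤ lam * S0 * ((J:ℝ) * M * x) := by
        rcases le_total (s - S0) 0 with h | h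
        · have hle0 : lam * (β l - ν l) * (s - S0) ≤ 0 :=
            mul_nonpos_of_nonneg_of_nonpos (mul_nonneg hlam.le hblnn) h
          have hge0 : 0 ≤ lam * S0 * ((J:ℝ) * M * x) :=
            mul_nonneg (mul_nonneg hlam.le hS0.le) hJMx
          linarith
        · have a1 : lam * (β l - ν l) * (s - S0) ≤ lam * S0 * (s - S0) :=
            mul_le_mul_of_nonneg_right (mul_le_mul_of_nonneg_left hbl hlam.le) h
          have a2 : lam * S0 * (s - S0) ≤ lam * S0 * ((J:ℝ) * M * x) :=
            mul_le_mul_of_nonneg_left (by linarith) (mul_nonneg hlam.le hS0.le)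
          linarith
      have h2 : lam * (v x l - ν l) * S0 ≤ lam * (M * x) * S0 :=
        mul_le_mul_of_nonneg_right (mul_le_mul_of_nonneg_left hva.2 hlam.le) hS0.le
      have h4 : 0 ≤ 2 * lam * M * ((J:ℝ) + 1) * x * (s - S0 / 2) :=
        mul_nonneg (mul_nonneg (mul_nonneg (mul_nonneg
          (mul_nonneg (by norm_num : (0:ℝ) ≤ 2) hlam.le) hM.le) hJ1pos.le) hx0)
          (by linarith)
      have key : lam * (β l - ν l) * s - lam * (β l - v x l) * S0 ≤
          2 * lam * M * ((J:ℝ) + 1) * x * s := by nlinarith [h1, h2, h4]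
      have hK1s : K1 * x * (S0 * s) = 2 * lam * M * ((J:ℝ) + 1) * x * s := by
        rw [hK1def]; field_simp
      have hdiff : lam * (β l - ν l) / S0 - lam * (β l - v x l) / s =
          (lam * (β l - ν l) * s - lam * (β l - v x l) * S0) / (S0 * s) := by
        field_simp
      have h5 : (lam * (β l - ν l) * s - lam * (β l - v x l) * S0) / (S0 * s) ≤ K1 * x := by
        rw [div_le_iff₀ (mul_pos hS0 hspos), hK1s]
        exact key
      rw [← hdiff] at h5
      linarith
    have e1 : mmu * ε ≤ μ l * ε := mul_le_mul_of_nonneg_right (hmmu_le l) hε.le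
    have e2 : μ l * (M + B) * x ≤ Mmu * (M + B) * x := by
      apply mul_le_mul_of_nonneg_right _ hx0
      exact mul_le_mul_of_nonneg_right (hMmu_le l) (by linarith)
    have e3 : K * x ≤ mmu * ε / 2 := by
      have : K * x ≤ K * τ := mul_le_mul_of_nonneg_left hxτ hK.le
      linarith
    have e4 : μ l * (v x l - w x l) ≤ μ l * ν l + μ l * (M + B) * x - μ l * ε := by
      have h9 : v x l - w x l ≤ ν l + M * x - (ε - B * x) := by linarith [hva.2]
      have := mul_le_mul_of_nonneg_left h9 (hμ l).le
      nlinarith [this]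
    have e5 : K * x = K1 * x + Mmu * (M + B) * x := by rw [hKdef]; ring
    linarith [hfrac, heq]
  -- monotone comparison for v · l
  have hg : MonotoneOn (fun s => v s l - mmu * ε / 2 * s) (Icc (0:ℝ) τ) := by
    apply monotoneOn_of_deriv_nonneg (convex_Icc _ _)
    · exact ((continuous_apply l).comp_continuousOn
        (hvc.mono Icc_subset_Ici_self)).sub (continuous_const.mul continuous_id).continuousOn
    · intro x hx
      rw [interior_Icc] at hx
      have hd := (hder x hx.1.le (hpos' x ⟨hx.1.le, hx.2.le⟩) l).1
      have hdx : HasDerivAt (fun s => v s l)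
          (lam * (β l - v x l) / (∑ m, (β m - v x m)) - μ l * (v x l - w x l)) x :=
        hd.hasDerivAt (Ici_mem_nhds hx.1)
      exact ((hdx.sub ((hasDerivAt_id x).const_mul (mmu * ε / 2))).differentiableAt).differentiableWithinAt
    · intro x hx
      rw [interior_Icc] at hx
      have hd := (hder x hx.1.le (hpos' x ⟨hx.1.le, hx.2.le⟩) l).1
      have hdx : HasDerivAt (fun s => v s l - mmu * ε / 2 * s)
          (lam * (β l - v x l) / (∑ m, (β m - v x m)) - μ l * (v x l - w x l) - mmu * ε / 2 * 1) x :=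
        (hd.hasDerivAt (Ici_mem_nhds hx.1)).sub ((hasDerivAt_id x).const_mul (mmu * ε / 2))
      rw [hdx.deriv]
      have := hv'low x hx
      linarith
  have h0m : (0:ℝ) ∈ Icc (0:ℝ) τ := ⟨le_refl _, hτ.le⟩
  have hτm : τ ∈ Icc (0:ℝ) τ := ⟨hτ.le, le_refl _⟩
  have := hg h0m hτm hτ.le
  simp only [mul_zero, sub_zero, hv0 l] at this
  linarith
end

section
/- Every fluid solution u on [0, ∞) with u(0) = 0 satisfies the strict inequality u(t) j < ν j for every t ≥ 0 and every j. (The fluid path from the idle initial state never attains the equilibrium point in finite time.) -/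
open scoped BigOperators
open Set Filter

/-- every fluid solution on `[0, ∞)` started from the idle state
satisfies the strict inequality `u(t) j < ν j` for all `t ≥ 0` and all `j`:
the fluid path never attains the equilibrium point in finite time. -/
theorem pull_fluid_from_idle_strictly_below
    (J : ℕ) (hJ : 1 ≤ J) (β μ : Fin J → ℝ)
    (hβ : ∀ j, 0 < β j) (hμ : ∀ j, 0 < μ j)
    (lam : ℝ) (hlam : 0 < lam) (hload : lam < ∑ j, β j * μ j)
    (ν : Fin J → ℝ)
    (hν1 : ∀ j, 0 < ν j ∧ ν j < β j)
    (hν2 : ∑ j, ν j * μ j = lam)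
    (hν3 : ∀ j l, ν j * μ j / (β j - ν j) = ν l * μ l / (β l - ν l))
    (u : ℝ → Fin J → ℝ)
    (hu : IsFluidSolution lam β μ (Ici 0) u) (hu0 : u 0 = 0) :
    ∀ t ∈ Ici (0:ℝ), ∀ j, u t j < ν j := by
  have hJ0 : 0 < J := hJ
  haveI : Nonempty (Fin J) := ⟨⟨0, hJ0⟩⟩
  obtain ⟨hucont, husol⟩ := hu
  set Sν : ℝ := ∑ l, (β l - ν l) with hSνdef
  have hSνpos : 0 < Sν :=
    Finset.sum_pos (fun l _ => sub_pos.mpr (hν1 l).2) Finset.univ_nonempty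
  set c : ℝ := lam / Sν with hcdef
  have hcpos : 0 < c := div_pos hlam hSνpos
  -- the equilibrium identity: c * (β j - ν j) = ν j * μ j for every j
  have hkey : ∀ j, c * (β j - ν j) = ν j * μ j := by
    set j0 : Fin J := ⟨0, hJ0⟩
    set c0 : ℝ := ν j0 * μ j0 / (β j0 - ν j0) with hc0def
    have hall : ∀ l, ν l * μ l = c0 * (β l - ν l) := by
      intro l
      have hβν : (0:ℝ) < β l - ν l := sub_pos.mpr (hν1 l).2
      have h := hν3 l j0
      rw [div_eq_iff hβν.ne'] at h
      linarith [h]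
    have hsum : lam = c0 * Sν := by
      rw [← hν2, hSνdef, Finset.mul_sum]
      exact Finset.sum_congr rfl fun l _ => hall l
    have hc0 : c = c0 := by
      rw [hcdef, hsum, mul_div_assoc, div_self hSνpos.ne', mul_one]
    intro j
    rw [hc0, ← hall j]
  -- the drift bound on the region below ν
  have hdrift : ∀ v : Fin J → ℝ, (∀ l, v l ≤ ν l) → 0 < fluidS β v →
      ∀ j, fluidF lam β μ j v ≤ (c + μ j) * (ν j - v j) := by
    intro v hv hS j
    have hSle : Sν ≤ fluidS β v :=
      Finset.sum_le_sum fun l _ => by linarith [hv l]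
    have hnum : 0 ≤ lam * (β j - v j) := by
      have : v j < β j := lt_of_le_of_lt (hv j) (hν1 j).2
      nlinarith
    have h1 : lam * (β j - v j) / fluidS β v ≤ lam * (β j - v j) / Sν :=
      div_le_div_of_nonneg_left hnum hSνpos hSle
    have h2 : lam * (β j - v j) / Sν = c * (β j - v j) := by
      rw [hcdef]; ring
    have h3 := hkey j
    rw [fluidF]
    nlinarith [h1, h2]
  -- contradiction setup
  by_contra hcon
  push_neg at hcon
  obtain ⟨t0, ht0, j0, hj0⟩ := hcon
  set A : Set ℝ := Ici 0 ∩ u ⁻¹' {v | ∃ j, ν j ≤ v j} with hAdef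
  have hAclosed : IsClosed A := by
    apply hucont.preimage_isClosed_of_isClosed isClosed_Ici
    have : {v : Fin J → ℝ | ∃ j, ν j ≤ v j} = ⋃ j, {v | ν j ≤ v j} := by
      ext v; simp
    rw [this]
    exact isClosed_iUnion_of_finite fun j =>
      isClosed_le continuous_const (continuous_apply j)
  have hAne : A.Nonempty := ⟨t0, ht0, j0, hj0⟩
  have hAbdd : BddBelow A := ⟨0, fun x hx => hx.1⟩
  set T : ℝ := sInf A with hTdef
  have hTA : T ∈ A := hAclosed.csInf_mem hAne hAbdd
  have hT0 : 0 ≤ T := hTA.1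
  -- below ν on [0, T]
  have hbelow : ∀ t ∈ Icc (0:ℝ) T, ∀ l, u t l ≤ ν l := by
    intro t ht l
    rcases lt_or_eq_of_le ht.2 with h | h
    · -- t < T, so t ∉ A
      by_contra hcontra
      push_neg at hcontra
      have : t ∈ A := ⟨ht.1, l, hcontra.le⟩
      exact absurd (csInf_le hAbdd this) (not_le.mpr h)
    · -- t = T : take limit from the left
      rcases eq_or_lt_of_le ht.1 with h0 | h0
      · rw [← h0, hu0]; exact (hν1 l).1.le
      · have hcw : ContinuousWithinAt (fun s => u s l) (Ico 0 t) t := by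
          have := ((hucont.continuousWithinAt (mem_Ici.mpr ht.1)).mono
            (Ico_subset_Ici_self (b := (0:ℝ)) (a := t)))
          exact (continuous_apply l).continuousAt.comp_continuousWithinAt this
        have hne : (nhdsWithin t (Ico 0 t)).NeBot := by
          rw [← mem_closure_iff_nhdsWithin_neBot, closure_Ico h0.ne, mem_Icc]
          exact ⟨ht.1, le_refl t⟩
        refine le_of_tendsto hcw ?_
        filter_upwards [self_mem_nhdsWithin] with s hs
        by_contra hcontra
        push_neg at hcontra
        have hsA : s ∈ A := ⟨hs.1, l, hcontra.le⟩
        have : T ≤ s := csInf_le hAbdd hsA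
        have : s < T := lt_of_lt_of_le hs.2 (le_of_eq h)
        linarith
  -- for each j, the function w(t) = (ν j - u t j) * exp((c + μ j) t) is monotone on [0,T]
  have hmain : ∀ j, u T j < ν j := by
    intro j
    set k : ℝ := c + μ j with hkdef
    set w : ℝ → ℝ := fun t => (ν j - u t j) * Real.exp (k * t) with hwdef
    have hwderiv : ∀ t ∈ Ioo (0:ℝ) T, HasDerivAt w
        ((-(fluidF lam β μ j (u t))) * Real.exp (k * t)
          + (ν j - u t j) * (k * Real.exp (k * t))) t := by
      intro t ht
      have htmem : t ∈ Ici (0:ℝ) := le_of_lt ht.1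
      have hIci : Ici (0:ℝ) ∈ nhds t := Ici_mem_nhds ht.1
      have h1 : HasDerivAt (fun s => u s j) (fluidF lam β μ j (u t)) t :=
        ((husol t htmem).2 j).hasDerivAt hIci
      have h2 : HasDerivAt (fun s => ν j - u s j) (-(fluidF lam β μ j (u t))) t := by
        have := (hasDerivAt_const t (ν j)).sub h1; rwa [zero_sub] at this
      have h3 : HasDerivAt (fun s => Real.exp (k * s)) (k * Real.exp (k * t)) t := by
        have := ((hasDerivAt_id t).const_mul k).exp
        simpa [mul_comm] using this
      exact h2.mul h3
    have hwcont : ContinuousOn w (Icc 0 T) := by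
      apply ContinuousOn.mul
      · exact continuousOn_const.sub
          (((continuous_apply j).comp_continuousOn
            (hucont.mono Icc_subset_Ici_self)))
      · exact (Real.continuous_exp.comp (continuous_const.mul continuous_id)).continuousOn
    have hmono : MonotoneOn w (Icc 0 T) := by
      apply monotoneOn_of_deriv_nonneg (convex_Icc 0 T) hwcont
      · intro x hx
        rw [interior_Icc] at hx
        exact ((hwderiv x hx).differentiableAt).differentiableWithinAt
      · intro x hx
        rw [interior_Icc] at hx
        rw [(hwderiv x hx).deriv]
        have hxm : x ∈ Icc (0:ℝ) T := ⟨hx.1.le, hx.2.le⟩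
        have hb := hbelow x hxm
        have hF := hdrift (u x) hb (husol x (le_of_lt hx.1)).1 j
        rw [← hkdef] at hF
        have hexp : (0:ℝ) < Real.exp (k * x) := Real.exp_pos _
        nlinarith [hF, hexp]
    have h0mem : (0:ℝ) ∈ Icc (0:ℝ) T := ⟨le_refl 0, hT0⟩
    have hTmem : T ∈ Icc (0:ℝ) T := ⟨hT0, le_refl T⟩
    have hw0 : w 0 = ν j := by
      simp [hwdef, hu0]
    have : ν j ≤ w T := by
      rw [← hw0]; exact hmono h0mem hTmem hT0
    have hwT : (ν j - u T j) * Real.exp (k * T) = w T := rfl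
    have hexp : (0:ℝ) < Real.exp (k * T) := Real.exp_pos _
    nlinarith [(hν1 j).1, this]
  obtain ⟨j1, hj1⟩ := hTA.2
  exact absurd (hmain j1) (not_lt.mpr hj1)
end
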